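/- arXiv:1904.02265 — 6 statements merged into one kernel-verified Lean document; each statement's English description precedes it below -/
import Mathlib

section
/- For every alternating sign matrix A of size n, I(A) ≤ β(A), where I(A) is the inversion number of A. -/
/-- An alternating sign matrix: entries in {-1,0,1}, partial row/column sums in {0,1},
full row/column sums equal to 1. -/
def IsASM {n : ℕ} (A : Matrix (Fin n) (Fin n) ℤ) : Prop :=
  (∀ i j, A i j = -1 ∨ A i j = 0 ∨ A i j = 1) ∧
  (∀ i j, (∑ k ∈ Finset.Iic j, A i k) = 0 ∨ (∑ k ∈ Finset.Iic j, A i k) = 1) ∧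
  (∀ i j, (∑ k ∈ Finset.Iic i, A k j) = 0 ∨ (∑ k ∈ Finset.Iic i, A k j) = 1) ∧
  (∀ i, (∑ k, A i k) = 1) ∧
  (∀ j, (∑ k, A k j) = 1)

/-- Corner sum matrix. -/
def cornerSum {n : ℕ} (A : Matrix (Fin n) (Fin n) ℤ) (i j : Fin n) : ℤ :=
  ∑ p ∈ Finset.Iic i, ∑ q ∈ Finset.Iic j, A p q

/-- ASM order: `A ≤ B` iff corner sums of `A` dominate those of `B`. -/
def asmLE {n : ℕ} (A B : Matrix (Fin n) (Fin n) ℤ) : Prop :=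
  ∀ i j, cornerSum B i j ≤ cornerSum A i j

def asmLT {n : ℕ} (A B : Matrix (Fin n) (Fin n) ℤ) : Prop :=
  asmLE A B ∧ ¬ asmLE B A

/-- `B` covers `A` in the poset of ASMs of size `n`. -/
def asmCovers {n : ℕ} (A B : Matrix (Fin n) (Fin n) ℤ) : Prop :=
  asmLT A B ∧ ∀ C : Matrix (Fin n) (Fin n) ℤ, IsASM C → asmLT A C → ¬ asmLT C B

/-- `A` is join-irreducible: it covers exactly one element of the ASM poset. -/
def JoinIrred {n : ℕ} (A : Matrix (Fin n) (Fin n) ℤ) : Prop :=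
  IsASM A ∧ ∃! C : Matrix (Fin n) (Fin n) ℤ, IsASM C ∧ asmCovers C A

/-- `β B` = number of join-irreducible ASMs weakly below `B`. -/
noncomputable def asmBeta {n : ℕ} (B : Matrix (Fin n) (Fin n) ℤ) : ℕ :=
  Set.ncard {A : Matrix (Fin n) (Fin n) ℤ | JoinIrred A ∧ asmLE A B}

/-- Inversion number of an ASM. -/
def asmInv {n : ℕ} (A : Matrix (Fin n) (Fin n) ℤ) : ℤ :=
  ∑ i : Fin n, ∑ j : Fin n, ∑ k : Fin n, ∑ l : Fin n,
    if i < j ∧ k < l then A j k * A i l else 0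

/-!
Write `r p q` for the sum of row `p` strictly left of column `q` and `c p q` for the sum of
column `q` strictly above row `p`. For an ASM both lie in `{0, 1}` and `I(A) = ∑ r p q * c p q`.
Bounding `r * c` by `c` on and above the diagonal and by `r` below it, the sums telescope into
corner sums: `I(A) ≤ ∑ₖ (d k k + d (k+1) k)`, where `d i j = min i j - Ã(i,j) ≥ 0` (corner sums
indexed by the number of rows and columns).

Conversely, for `Ã(i,j) ≤ v < min i j` the ASM with corner sums `min(p, q, v + (p-i)⁺ + (q-j)⁺)`
lies below `A` and is join-irreducible: its only lower cover raises the corner sum at `(i,j)` by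
one. These ASMs are pairwise distinct, so `β(A) ≥ ∑ d i j`.
-/

open Finset

namespace AlternatingSignMatrix

variable {n : ℕ}

def natEntry (A : Matrix (Fin n) (Fin n) ℤ) (p q : ℕ) : ℤ :=
  if h : p < n ∧ q < n then A ⟨p, h.1⟩ ⟨q, h.2⟩ else 0

@[simp]
lemma natEntry_val (A : Matrix (Fin n) (Fin n) ℤ) (p q : Fin n) : natEntry A p q = A p q := by
  simp [natEntry]

def rowPrefix (A : Matrix (Fin n) (Fin n) ℤ) (p j : ℕ) : ℤ := ∑ q ∈ range j, natEntry A p q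

def colPrefix (A : Matrix (Fin n) (Fin n) ℤ) (i q : ℕ) : ℤ := ∑ p ∈ range i, natEntry A p q

def corner (A : Matrix (Fin n) (Fin n) ℤ) (i j : ℕ) : ℤ := ∑ p ∈ range i, rowPrefix A p j

section

variable (A : Matrix (Fin n) (Fin n) ℤ)

@[simp] lemma corner_zero_left (j : ℕ) : corner A 0 j = 0 := by simp [corner]

@[simp] lemma corner_zero_right (i : ℕ) : corner A i 0 = 0 := by simp [corner, rowPrefix]

lemma corner_eq_sum_colPrefix (i j : ℕ) : corner A i j = ∑ q ∈ range j, colPrefix A i q :=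
  sum_comm

lemma rowPrefix_succ (p j : ℕ) : rowPrefix A p (j + 1) = rowPrefix A p j + natEntry A p j :=
  sum_range_succ _ _

lemma rowPrefix_eq_sub (p j : ℕ) : rowPrefix A p j = corner A (p + 1) j - corner A p j := by
  simp [corner, sum_range_succ]

lemma colPrefix_eq_sub (i q : ℕ) : colPrefix A i q = corner A i (q + 1) - corner A i q := by
  simp [corner_eq_sum_colPrefix, sum_range_succ]

lemma sum_Ico_rowPrefix {a b : ℕ} (hab : a ≤ b) (j : ℕ) :
    ∑ p ∈ Ico a b, rowPrefix A p j = corner A b j - corner A a j :=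
  sum_Ico_eq_sub _ hab

lemma sum_Ico_colPrefix {a b : ℕ} (hab : a ≤ b) (i : ℕ) :
    ∑ q ∈ Ico a b, colPrefix A i q = corner A i b - corner A i a := by
  rw [corner_eq_sum_colPrefix, corner_eq_sum_colPrefix]
  exact sum_Ico_eq_sub _ hab

lemma sum_Iio_eq_sum_range {M : Type*} [AddCommMonoid M] (f : ℕ → M) (j : Fin n) :
    ∑ k ∈ Iio j, f k = ∑ k ∈ range j, f k := by
  rw [← Nat.Iio_eq_range, ← Fin.map_valEmbedding_Iio, sum_map]
  rfl

lemma sum_Iic_eq_sum_range {M : Type*} [AddCommMonoid M] (f : ℕ → M) (j : Fin n) :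
    ∑ k ∈ Iic j, f k = ∑ k ∈ range (j + 1), f k := by
  rw [Nat.range_succ_eq_Iic, ← Fin.map_valEmbedding_Iic, sum_map]
  rfl

lemma sum_Iic_row (p q : Fin n) : ∑ k ∈ Iic q, A p k = rowPrefix A p (q + 1) := by
  simp_rw [← natEntry_val A p]
  exact sum_Iic_eq_sum_range _ q

lemma sum_Iic_col (p q : Fin n) : ∑ k ∈ Iic p, A k q = colPrefix A (p + 1) q := by
  simp_rw [← natEntry_val A _ q]
  exact sum_Iic_eq_sum_range (fun k => natEntry A k q) p

lemma sum_row (p : Fin n) : ∑ k, A p k = rowPrefix A p n := by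
  simp_rw [← natEntry_val A p]
  exact Fin.sum_univ_eq_sum_range (fun k => natEntry A p k) n

lemma sum_col (q : Fin n) : ∑ k, A k q = colPrefix A n q := by
  simp_rw [← natEntry_val A _ q]
  exact Fin.sum_univ_eq_sum_range (fun k => natEntry A k q) n

lemma cornerSum_eq_corner (i j : Fin n) : cornerSum A i j = corner A (i + 1) (j + 1) := by
  simp_rw [cornerSum, sum_Iic_row]
  exact sum_Iic_eq_sum_range (fun p => rowPrefix A p (j + 1)) i

end

structure IsASMCorner (n : ℕ) (g : ℕ → ℕ → ℤ) : Prop where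
  top : ∀ j ≤ n, g 0 j = 0
  left : ∀ i ≤ n, g i 0 = 0
  bottom : ∀ j ≤ n, g n j = j
  right : ∀ i ≤ n, g i n = i
  step_down : ∀ i < n, ∀ j ≤ n, g (i + 1) j = g i j ∨ g (i + 1) j = g i j + 1
  step_right : ∀ i ≤ n, ∀ j < n, g i (j + 1) = g i j ∨ g i (j + 1) = g i j + 1

namespace IsASMCorner

variable {g : ℕ → ℕ → ℤ} (hg : IsASMCorner n g)
include hg

lemma lipschitz_down {i i' j : ℕ} (hii' : i ≤ i') (hi' : i' ≤ n) (hj : j ≤ n) :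
    g i j ≤ g i' j ∧ g i' j ≤ g i j + (i' - i : ℕ) := by
  induction i', hii' using Nat.le_induction with
  | base => simp
  | succ k hik ih =>
    have := hg.step_down k (by omega) j hj
    have := ih (by omega)
    omega

lemma lipschitz_right {i j j' : ℕ} (hjj' : j ≤ j') (hj' : j' ≤ n) (hi : i ≤ n) :
    g i j ≤ g i j' ∧ g i j' ≤ g i j + (j' - j : ℕ) := by
  induction j', hjj' using Nat.le_induction with
  | base => simp
  | succ k hjk ih =>
    have := hg.step_right i hi k (by omega)
    have := ih (by omega)
    omega

lemma le_cone {i j p q : ℕ} (hi : i ≤ n) (hj : j ≤ n) (hp : p ≤ n) (hq : q ≤ n) :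
    g p q ≤ g i j + (p - i : ℕ) + (q - j : ℕ) := by
  have h₁ := hg.lipschitz_down (le_max_left p i) (max_le hp hi) hq
  have h₂ := hg.lipschitz_down (le_max_right p i) (max_le hp hi) (max_le hq hj)
  have h₃ := hg.lipschitz_right (le_max_left q j) (max_le hq hj) (max_le hp hi)
  have h₄ := hg.lipschitz_right (le_max_right q j) (max_le hq hj) hi
  omega

lemma nonneg {i j : ℕ} (hi : i ≤ n) (hj : j ≤ n) : 0 ≤ g i j := by
  have := hg.lipschitz_down (Nat.zero_le i) hi hj
  have := hg.top j hj
  omega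

lemma le_min {i j : ℕ} (hi : i ≤ n) (hj : j ≤ n) : g i j ≤ min (i : ℤ) j := by
  have := hg.le_cone (Nat.zero_le n) hj hi hj
  have := hg.le_cone hi (Nat.zero_le n) hi hj
  have := hg.top j hj
  have := hg.left i hi
  omega

lemma add_le {i j : ℕ} (hi : i ≤ n) (hj : j ≤ n) : (i + j : ℤ) ≤ g i j + n := by
  have := hg.lipschitz_right hj le_rfl hi
  have := hg.right i hi
  omega

end IsASMCorner

variable {A B : Matrix (Fin n) (Fin n) ℤ}

lemma _root_.IsASM.rowPrefix_mem (hA : IsASM A) {p j : ℕ} (hp : p < n) (hj : j ≤ n) :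
    rowPrefix A p j = 0 ∨ rowPrefix A p j = 1 := by
  rcases j with _ | j
  · simp [rowPrefix]
  · simpa [sum_Iic_row] using hA.2.1 ⟨p, hp⟩ ⟨j, hj⟩

lemma _root_.IsASM.colPrefix_mem (hA : IsASM A) {i q : ℕ} (hi : i ≤ n) (hq : q < n) :
    colPrefix A i q = 0 ∨ colPrefix A i q = 1 := by
  rcases i with _ | i
  · simp [colPrefix]
  · simpa [sum_Iic_col] using hA.2.2.1 ⟨i, hi⟩ ⟨q, hq⟩

lemma _root_.IsASM.rowPrefix_full (hA : IsASM A) {p : ℕ} (hp : p < n) : rowPrefix A p n = 1 := by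
  simpa [sum_row] using hA.2.2.2.1 ⟨p, hp⟩

lemma _root_.IsASM.colPrefix_full (hA : IsASM A) {q : ℕ} (hq : q < n) : colPrefix A n q = 1 := by
  simpa [sum_col] using hA.2.2.2.2 ⟨q, hq⟩

lemma _root_.IsASM.isASMCorner (hA : IsASM A) : IsASMCorner n (corner A) where
  top _ _ := corner_zero_left A _
  left _ _ := corner_zero_right A _
  bottom j hj := by
    rw [corner_eq_sum_colPrefix, sum_congr rfl fun q hq => hA.colPrefix_full (by simp at hq; omega)]
    simp
  right i hi := by
    rw [corner, sum_congr rfl fun p hp => hA.rowPrefix_full (by simp at hp; omega)]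
    simp
  step_down i hi j hj := by
    have := rowPrefix_eq_sub A i j
    rcases hA.rowPrefix_mem hi hj with h | h <;> omega
  step_right i hi j hj := by
    have := colPrefix_eq_sub A i j
    rcases hA.colPrefix_mem hi hj with h | h <;> omega

def ofCorner (g : ℕ → ℕ → ℤ) : Matrix (Fin n) (Fin n) ℤ :=
  fun p q => g (p + 1) (q + 1) - g p (q + 1) - g (p + 1) q + g p q

lemma corner_ofCorner_eq (g : ℕ → ℕ → ℤ) {i j : ℕ} (hi : i ≤ n) (hj : j ≤ n) :
    corner (ofCorner (n := n) g) i j = g i j - g 0 j - g i 0 + g 0 0 := by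
  have hentry : ∀ p ∈ range i, ∀ q ∈ range j, natEntry (ofCorner (n := n) g) p q =
      (g (p + 1) (q + 1) - g p (q + 1)) - (g (p + 1) q - g p q) := by
    intro p hp q hq
    simp only [mem_range] at hp hq
    rw [natEntry, dif_pos ⟨by omega, by omega⟩, ofCorner]
    ring
  simp only [corner, rowPrefix]
  rw [sum_congr rfl fun p hp => sum_congr rfl (hentry p hp),
    sum_congr rfl fun p _ => sum_range_sub (fun q => g (p + 1) q - g p q) j]
  calc
    _ = ∑ p ∈ range i, ((g (p + 1) j - g (p + 1) 0) - (g p j - g p 0)) :=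
      sum_congr rfl fun p _ => by ring
    _ = _ := by rw [sum_range_sub (fun p => g p j - g p 0)]; ring

lemma IsASMCorner.corner_ofCorner {g : ℕ → ℕ → ℤ} (hg : IsASMCorner n g) {i j : ℕ}
    (hi : i ≤ n) (hj : j ≤ n) : corner (ofCorner (n := n) g) i j = g i j := by
  rw [corner_ofCorner_eq g hi hj, hg.top j hj, hg.left i hi, hg.top 0 (Nat.zero_le n)]
  ring

lemma IsASMCorner.isASM_ofCorner {g : ℕ → ℕ → ℤ} (hg : IsASMCorner n g) :
    IsASM (ofCorner (n := n) g) := by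
  have hrow (p q : ℕ) (hp : p < n) (hq : q ≤ n) :
      rowPrefix (ofCorner (n := n) g) p q = g (p + 1) q - g p q := by
    rw [rowPrefix_eq_sub, hg.corner_ofCorner hp hq, hg.corner_ofCorner hp.le hq]
  have hcol (p q : ℕ) (hp : p ≤ n) (hq : q < n) :
      colPrefix (ofCorner (n := n) g) p q = g p (q + 1) - g p q := by
    rw [colPrefix_eq_sub, hg.corner_ofCorner hp hq, hg.corner_ofCorner hp hq.le]
  refine ⟨fun p q => ?_, fun p q => ?_, fun p q => ?_, fun p => ?_, fun q => ?_⟩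
  · have := hg.step_down p p.2 q q.2.le
    have := hg.step_down p p.2 (q + 1) q.2
    simp only [ofCorner]
    omega
  · rw [sum_Iic_row, hrow p (q + 1) p.2 q.2]
    have := hg.step_down p p.2 (q + 1) q.2
    omega
  · rw [sum_Iic_col, hcol (p + 1) q p.2 q.2]
    have := hg.step_right (p + 1) p.2 q q.2
    omega
  · rw [sum_row, hrow p n p.2 le_rfl, hg.right _ p.2, hg.right _ p.2.le]
    push_cast
    ring
  · rw [sum_col, hcol n q le_rfl q.2, hg.bottom _ q.2, hg.bottom _ q.2.le]
    push_cast
    ring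

lemma ofCorner_corner (A : Matrix (Fin n) (Fin n) ℤ) : ofCorner (corner A) = A := by
  ext p q
  have h₁ := rowPrefix_eq_sub A p (q + 1)
  have h₂ := rowPrefix_eq_sub A p q
  have h₃ := rowPrefix_succ A p q
  simp only [ofCorner, natEntry_val] at h₃ ⊢
  linarith

lemma eq_of_corner_eq (h : ∀ i ≤ n, ∀ j ≤ n, corner A i j = corner B i j) : A = B := by
  rw [← ofCorner_corner A, ← ofCorner_corner B]
  ext p q
  simp only [ofCorner, h p p.2.le q q.2.le, h (p + 1) p.2 q q.2.le, h p p.2.le (q + 1) q.2,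
    h (p + 1) p.2 (q + 1) q.2]

lemma asmLE_iff_corner : asmLE A B ↔ ∀ i ≤ n, ∀ j ≤ n, corner B i j ≤ corner A i j := by
  refine ⟨fun h i hi j hj => ?_, fun h i j => ?_⟩
  · rcases i with _ | i
    · simp
    rcases j with _ | j
    · simp
    simpa [cornerSum_eq_corner] using h ⟨i, hi⟩ ⟨j, hj⟩
  · simpa [cornerSum_eq_corner] using h (i + 1) i.2 (j + 1) j.2

lemma asmLE_antisymm (hAB : asmLE A B) (hBA : asmLE B A) : A = B :=
  eq_of_corner_eq fun i hi j hj =>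
    le_antisymm (asmLE_iff_corner.1 hBA i hi j hj) (asmLE_iff_corner.1 hAB i hi j hj)

lemma asmLT_iff_asmLE_and_ne : asmLT A B ↔ asmLE A B ∧ A ≠ B :=
  and_congr_right fun hAB =>
    ⟨fun h hAB' => h (hAB' ▸ fun _ _ => le_rfl), fun hne hBA => hne (asmLE_antisymm hAB hBA)⟩

section

variable {i j : ℕ} {v : ℤ}

def IsJIIndex (n i j : ℕ) (v : ℤ) : Prop :=
  0 ≤ v ∧ v < i ∧ v < j ∧ (i + j : ℤ) ≤ v + n

def jiCorner (i j : ℕ) (v : ℤ) (p q : ℕ) : ℤ :=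
  min (min (p : ℤ) q) (v + (p - i : ℕ) + (q - j : ℕ))

def jiPredCorner (i j : ℕ) (v : ℤ) (p q : ℕ) : ℤ :=
  jiCorner i j v p q + if p = i ∧ q = j then 1 else 0

def jiMatrix (n i j : ℕ) (v : ℤ) : Matrix (Fin n) (Fin n) ℤ := ofCorner (jiCorner i j v)

def jiPred (n i j : ℕ) (v : ℤ) : Matrix (Fin n) (Fin n) ℤ := ofCorner (jiPredCorner i j v)

lemma IsASMCorner.le_jiCorner {g : ℕ → ℕ → ℤ} (hg : IsASMCorner n g) (hi : i ≤ n) (hj : j ≤ n)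
    (hv : g i j ≤ v) {p q : ℕ} (hp : p ≤ n) (hq : q ≤ n) : g p q ≤ jiCorner i j v p q :=
  _root_.le_min (hg.le_min hp hq) (by linarith [hg.le_cone hi hj hp hq])

namespace IsJIIndex

variable (h : IsJIIndex n i j v)
include h

lemma left_le : i ≤ n := by obtain ⟨_, _, _, _⟩ := h; omega

lemma right_le : j ≤ n := by obtain ⟨_, _, _, _⟩ := h; omega

lemma jiCorner_self : jiCorner i j v i j = v := by
  obtain ⟨_, _, _, _⟩ := h
  simp only [jiCorner]
  omega

lemma isASMCorner_jiCorner : IsASMCorner n (jiCorner i j v) := by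
  obtain ⟨_, _, _, _⟩ := h
  constructor <;> intros <;> simp only [jiCorner] <;> omega

lemma isASMCorner_jiPredCorner : IsASMCorner n (jiPredCorner i j v) := by
  obtain ⟨_, _, _, _⟩ := h
  constructor <;> intros <;> simp only [jiPredCorner, jiCorner] <;> split_ifs <;> omega

lemma corner_jiMatrix {p q : ℕ} (hp : p ≤ n) (hq : q ≤ n) :
    corner (jiMatrix n i j v) p q = jiCorner i j v p q :=
  h.isASMCorner_jiCorner.corner_ofCorner hp hq

lemma corner_jiPred {p q : ℕ} (hp : p ≤ n) (hq : q ≤ n) :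
    corner (jiPred n i j v) p q = jiPredCorner i j v p q :=
  h.isASMCorner_jiPredCorner.corner_ofCorner hp hq

lemma asmLE_jiMatrix {A : Matrix (Fin n) (Fin n) ℤ} (hA : IsASM A) (hv : corner A i j ≤ v) :
    asmLE (jiMatrix n i j v) A :=
  asmLE_iff_corner.2 fun p hp q hq => by
    rw [h.corner_jiMatrix hp hq]
    exact hA.isASMCorner.le_jiCorner h.left_le h.right_le hv hp hq

lemma jiPred_asmLT : asmLT (jiPred n i j v) (jiMatrix n i j v) := by
  refine asmLT_iff_asmLE_and_ne.2 ⟨asmLE_iff_corner.2 fun p hp q hq => ?_, fun he => ?_⟩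
  · rw [h.corner_jiMatrix hp hq, h.corner_jiPred hp hq, jiPredCorner]
    split_ifs <;> omega
  · have := h.corner_jiPred h.left_le h.right_le
    rw [he, h.corner_jiMatrix h.left_le h.right_le, jiPredCorner] at this
    simp at this

lemma asmLE_jiPred_of_asmLT {C : Matrix (Fin n) (Fin n) ℤ} (hC : IsASM C)
    (hlt : asmLT C (jiMatrix n i j v)) : asmLE C (jiPred n i j v) := by
  have hv : v < corner C i j := not_le.1 fun hv => hlt.2 (h.asmLE_jiMatrix hC hv)
  refine asmLE_iff_corner.2 fun p hp q hq => ?_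
  have := asmLE_iff_corner.1 hlt.1 p hp q hq
  rw [h.corner_jiMatrix hp hq] at this
  rw [h.corner_jiPred hp hq, jiPredCorner]
  split_ifs with hpq
  · obtain ⟨rfl, rfl⟩ := hpq
    rw [h.jiCorner_self]
    omega
  · omega

lemma asmCovers_jiPred : asmCovers (jiPred n i j v) (jiMatrix n i j v) :=
  ⟨h.jiPred_asmLT, fun _ hX hlt hgt => hlt.2 (h.asmLE_jiPred_of_asmLT hX hgt)⟩

lemma eq_jiPred_of_asmCovers {C : Matrix (Fin n) (Fin n) ℤ} (hC : IsASM C)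
    (hcov : asmCovers C (jiMatrix n i j v)) : C = jiPred n i j v := by
  by_contra hne
  exact hcov.2 _ h.isASMCorner_jiPredCorner.isASM_ofCorner
    (asmLT_iff_asmLE_and_ne.2 ⟨h.asmLE_jiPred_of_asmLT hC hcov.1, hne⟩) h.jiPred_asmLT

lemma joinIrred_jiMatrix : JoinIrred (jiMatrix n i j v) :=
  ⟨h.isASMCorner_jiCorner.isASM_ofCorner, jiPred n i j v,
    ⟨h.isASMCorner_jiPredCorner.isASM_ofCorner, h.asmCovers_jiPred⟩,
    fun _ hC => h.eq_jiPred_of_asmCovers hC.1 hC.2⟩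

-- The index `(i, j)` is the unique corner at which `jiMatrix` and its lower cover differ.
lemma eq_of_jiMatrix_eq {i' j' : ℕ} {v' : ℤ} (h' : IsJIIndex n i' j' v')
    (he : jiMatrix n i j v = jiMatrix n i' j' v') : i = i' ∧ j = j' ∧ v = v' := by
  have hpred : jiPred n i' j' v' = jiPred n i j v :=
    h.eq_jiPred_of_asmCovers h'.isASMCorner_jiPredCorner.isASM_ofCorner (he ▸ h'.asmCovers_jiPred)
  have hJ := congrArg (corner · i j) he
  have hP := congrArg (corner · i j) hpred
  simp only [h.corner_jiMatrix h.left_le h.right_le, h'.corner_jiMatrix h.left_le h.right_le,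
    h.corner_jiPred h.left_le h.right_le, h'.corner_jiPred h.left_le h.right_le,
    jiPredCorner, h.jiCorner_self] at hJ hP
  obtain ⟨rfl, rfl⟩ : i = i' ∧ j = j' := by
    by_contra hne
    simp only [if_neg hne, and_self, ite_true] at hP
    omega
  exact ⟨rfl, rfl, by rw [hJ, h'.jiCorner_self]⟩

end IsJIIndex

end

def defect (A : Matrix (Fin n) (Fin n) ℤ) (i j : ℕ) : ℤ := min (i : ℤ) j - corner A i j

noncomputable def jiIndices (A : Matrix (Fin n) (Fin n) ℤ) : Finset ((_ : ℕ × ℕ) × ℤ) :=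
  (range (n + 1) ×ˢ range (n + 1)).sigma fun ij => Ico (corner A ij.1 ij.2) (min (ij.1 : ℤ) ij.2)

lemma _root_.IsASM.defect_nonneg (hA : IsASM A) {i j : ℕ} (hi : i ≤ n) (hj : j ≤ n) :
    0 ≤ defect A i j := by
  have := hA.isASMCorner.le_min hi hj
  rw [defect]
  omega

lemma _root_.IsASM.card_jiIndices (hA : IsASM A) :
    (#(jiIndices A) : ℤ) = ∑ i ∈ range (n + 1), ∑ j ∈ range (n + 1), defect A i j := by
  rw [jiIndices, card_sigma, sum_product]
  push_cast
  refine sum_congr rfl fun i hi => sum_congr rfl fun j hj => ?_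
  have := hA.defect_nonneg (Nat.lt_succ_iff.1 (mem_range.1 hi)) (Nat.lt_succ_iff.1 (mem_range.1 hj))
  rw [defect] at this
  rw [Int.card_Ico, Int.toNat_of_nonneg (by omega), defect]

lemma _root_.IsASM.isJIIndex_of_mem_jiIndices (hA : IsASM A) {i j : ℕ} {v : ℤ}
    (hs : ⟨(i, j), v⟩ ∈ jiIndices A) : IsJIIndex n i j v ∧ corner A i j ≤ v := by
  simp only [jiIndices, mem_sigma, mem_product, mem_range, mem_Ico] at hs
  obtain ⟨⟨hi, hj⟩, hv, hvij⟩ := hs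
  have := hA.isASMCorner.nonneg (Nat.lt_succ_iff.1 hi) (Nat.lt_succ_iff.1 hj)
  have := hA.isASMCorner.add_le (Nat.lt_succ_iff.1 hi) (Nat.lt_succ_iff.1 hj)
  exact ⟨⟨by omega, by omega, by omega, by omega⟩, hv⟩

lemma finite_setOf_isASM : {X : Matrix (Fin n) (Fin n) ℤ | IsASM X}.Finite := by
  refine (Set.Finite.pi fun _ => Set.Finite.pi fun _ => Set.finite_Icc (-1 : ℤ) 1).subset ?_
  intro X hX p _ q _
  rcases hX.1 p q with h | h | h <;> simp [h]

lemma _root_.IsASM.card_jiIndices_le_asmBeta (hA : IsASM A) : #(jiIndices A) ≤ asmBeta A := by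
  rw [← Set.ncard_coe_finset]
  refine Set.ncard_le_ncard_of_injOn (fun s => jiMatrix n s.1.1 s.1.2 s.2) ?_ ?_
    (finite_setOf_isASM.subset fun X hX => hX.1.1)
  · rintro ⟨⟨i, j⟩, v⟩ hs
    obtain ⟨h, hv⟩ := hA.isJIIndex_of_mem_jiIndices hs
    exact ⟨h.joinIrred_jiMatrix, h.asmLE_jiMatrix hA hv⟩
  · rintro ⟨⟨i, j⟩, v⟩ hs ⟨⟨i', j'⟩, v'⟩ hs' he
    have h := (hA.isJIIndex_of_mem_jiIndices hs).1
    obtain ⟨rfl, rfl, rfl⟩ := h.eq_of_jiMatrix_eq (hA.isJIIndex_of_mem_jiIndices hs').1 he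
    rfl

lemma sum_ite_lt_eq_rowPrefix (A : Matrix (Fin n) (Fin n) ℤ) (p q : Fin n) :
    ∑ k, (if k < q then A p k else 0) = rowPrefix A p q := by
  rw [← sum_filter, filter_gt_eq_Iio]
  simp_rw [← natEntry_val A p]
  exact sum_Iio_eq_sum_range _ q

lemma sum_ite_lt_eq_colPrefix (A : Matrix (Fin n) (Fin n) ℤ) (p q : Fin n) :
    ∑ k, (if k < p then A k q else 0) = colPrefix A p q := by
  rw [← sum_filter, filter_gt_eq_Iio]
  simp_rw [← natEntry_val A _ q]
  exact sum_Iio_eq_sum_range (fun k => natEntry A k q) p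

lemma asmInv_eq_sum_rowPrefix_mul_colPrefix (A : Matrix (Fin n) (Fin n) ℤ) :
    asmInv A = ∑ p ∈ range n, ∑ q ∈ range n, rowPrefix A p q * colPrefix A p q := by
  calc
    asmInv A = ∑ p : Fin n, ∑ q : Fin n,
        (∑ k, if k < q then A p k else 0) * (∑ k, if k < p then A k q else 0) := by
      simp only [asmInv, sum_mul_sum, ite_zero_mul_ite_zero]
      rw [sum_comm]
      refine sum_congr rfl fun j _ => ?_
      conv_lhs =>
        rw [sum_comm]
        enter [2, k]
        rw [sum_comm]
      rw [sum_comm]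
      exact sum_congr rfl fun l _ => sum_congr rfl fun k _ => sum_congr rfl fun i _ =>
        if_congr and_comm rfl rfl
    _ = ∑ p : Fin n, ∑ q : Fin n, rowPrefix A p q * colPrefix A p q := by
      simp only [sum_ite_lt_eq_rowPrefix, sum_ite_lt_eq_colPrefix]
    _ = _ := by
      rw [Fin.sum_univ_eq_sum_range (fun p => ∑ q : Fin n, rowPrefix A p q * colPrefix A p q)]
      exact sum_congr rfl fun p _ =>
        Fin.sum_univ_eq_sum_range (fun q => rowPrefix A p q * colPrefix A p q) n

lemma _root_.IsASM.rowPrefix_mul_colPrefix_le (hA : IsASM A) {p q : ℕ} (hp : p < n) (hq : q < n) :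
    rowPrefix A p q * colPrefix A p q ≤ rowPrefix A p q ∧
      rowPrefix A p q * colPrefix A p q ≤ colPrefix A p q := by
  rcases hA.rowPrefix_mem hp hq.le with hr | hr <;>
    rcases hA.colPrefix_mem hp.le hq with hc | hc <;> simp [hr, hc]

lemma _root_.IsASM.asmInv_le_sum_defect (hA : IsASM A) :
    asmInv A ≤ ∑ k ∈ range n, (defect A k k + defect A (k + 1) k) := by
  calc
    asmInv A = ∑ p ∈ range n, ∑ q ∈ range n, rowPrefix A p q * colPrefix A p q :=
      asmInv_eq_sum_rowPrefix_mul_colPrefix A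
    _ ≤ ∑ p ∈ range n, (∑ q ∈ range p, rowPrefix A p q + ∑ q ∈ Ico p n, colPrefix A p q) := by
      refine sum_le_sum fun p hp => ?_
      have hp := mem_range.1 hp
      rw [← sum_range_add_sum_Ico _ hp.le]
      gcongr with q hq q hq
      · exact (hA.rowPrefix_mul_colPrefix_le hp (by simp only [mem_range] at hq; omega)).1
      · exact (hA.rowPrefix_mul_colPrefix_le hp (mem_Ico.1 hq).2).2
    _ = ∑ q ∈ range n, ∑ p ∈ Ico (q + 1) n, rowPrefix A p q
          + ∑ p ∈ range n, ∑ q ∈ Ico p n, colPrefix A p q := by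
      rw [sum_add_distrib, sum_comm' (t' := range n) (s' := fun q => Ico (q + 1) n)
        fun p q => by simp only [mem_range, mem_Ico]; omega]
    _ = ∑ k ∈ range n, (defect A k k + defect A (k + 1) k) := by
      rw [add_comm, ← sum_add_distrib]
      refine sum_congr rfl fun k hk => ?_
      have hk := mem_range.1 hk
      rw [sum_Ico_colPrefix A hk.le, sum_Ico_rowPrefix A (by omega : k + 1 ≤ n),
        hA.isASMCorner.right k hk.le,
        hA.isASMCorner.bottom k hk.le, defect, defect]
      omega

lemma _root_.IsASM.sum_defect_diag_le (hA : IsASM A) :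
    ∑ k ∈ range n, (defect A k k + defect A (k + 1) k)
      ≤ ∑ i ∈ range (n + 1), ∑ j ∈ range (n + 1), defect A i j := by
  have hnonneg : ∀ j ≤ n, ∀ i ∈ range (n + 1), 0 ≤ defect A i j := fun j hj i hi =>
    hA.defect_nonneg (Nat.lt_succ_iff.1 (mem_range.1 hi)) hj
  rw [sum_comm]
  calc
    _ ≤ ∑ k ∈ range n, ∑ i ∈ range (n + 1), defect A i k := by
      refine sum_le_sum fun k hk => ?_
      have hk := mem_range.1 hk
      exact add_le_sum (hnonneg k hk.le) (mem_range.2 (by omega)) (mem_range.2 (by omega))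
        (by omega)
    _ ≤ _ := sum_le_sum_of_subset_of_nonneg (range_subset_range.2 n.le_succ) fun j hj _ =>
      sum_nonneg (hnonneg j (Nat.lt_succ_iff.1 (mem_range.1 hj)))

end AlternatingSignMatrix

open AlternatingSignMatrix

theorem asmInv_le_asmBeta {n : ℕ} (A : Matrix (Fin n) (Fin n) ℤ) (hA : IsASM A) :
    asmInv A ≤ (asmBeta A : ℤ) :=
  calc
    asmInv A ≤ ∑ k ∈ range n, (defect A k k + defect A (k + 1) k) := hA.asmInv_le_sum_defect
    _ ≤ ∑ i ∈ range (n + 1), ∑ j ∈ range (n + 1), defect A i j := hA.sum_defect_diag_le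
    _ = #(jiIndices A) := hA.card_jiIndices.symm
    _ ≤ asmBeta A := by exact_mod_cast hA.card_jiIndices_le_asmBeta
end

section
/- For every alternating sign matrix B of size n, I(B) + I*(B) − N(B) = n(n−1)/2, where I(B) is the inversion number, I*(B) the dual inversion number, and N(B) the number of entries of B equal to −1. -/
/-- Number of `-1` entries of a matrix. -/
def numNegOnes {n : ℕ} (A : Matrix (Fin n) (Fin n) ℤ) : ℕ :=
  (Finset.univ.filter fun p : Fin n × Fin n => A p.1 p.2 = -1).card

/-- Dual inversion number of an ASM. -/
def asmDualInv {n : ℕ} (A : Matrix (Fin n) (Fin n) ℤ) : ℤ :=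
  ∑ i : Fin n, ∑ j : Fin n, ∑ k : Fin n, ∑ l : Fin n,
    if i < j ∧ k < l then A i k * A j l else 0

theorem inv_add_dualInv_sub_num {n : ℕ} (B : Matrix (Fin n) (Fin n) ℤ)
    (hB : IsASM B) :
    asmInv B + asmDualInv B - (numNegOnes B : ℤ) = (n : ℤ) * ((n : ℤ) - 1) / 2 := by
  obtain ⟨h01, -, -, hrow, hcol⟩ := hB
  -- square identity per entry
  have hsq : ∀ i k, B i k * B i k = 2 * (if B i k = -1 then (1:ℤ) else 0) + B i k := by
    intro i k; rcases h01 i k with h | h | h <;> simp [h]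
  -- S = number of pairs k < l (as an integer sum)
  set S : ℤ := ∑ k : Fin n, ∑ l : Fin n, (if k < l then (1:ℤ) else 0) with hS
  -- 2 * S = n * (n - 1)
  have htot : 2 * S = (n : ℤ) * ((n : ℤ) - 1) := by
    have hsym : (∑ k : Fin n, ∑ l : Fin n, (if l < k then (1:ℤ) else 0)) = S := by
      rw [hS, Finset.sum_comm]
    have hdiag : (∑ k : Fin n, ∑ l : Fin n, (if k = l then (1:ℤ) else 0)) = (n : ℤ) := by
      simp [Finset.sum_ite_eq]
    have hall : S + ((∑ k : Fin n, ∑ l : Fin n, (if l < k then (1:ℤ) else 0))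
        + (∑ k : Fin n, ∑ l : Fin n, (if k = l then (1:ℤ) else 0))) = (n : ℤ) * (n : ℤ) := by
      rw [hS]
      simp_rw [← Finset.sum_add_distrib]
      rw [show ((n : ℤ) * (n : ℤ)) = ∑ _k : Fin n, ∑ _l : Fin n, (1:ℤ) by simp [mul_comm]]
      refine Finset.sum_congr rfl fun k _ => Finset.sum_congr rfl fun l _ => ?_
      rcases lt_trichotomy k l with h | h | h
      · simp [h, asymm h, h.ne]
      · simp [h]
      · simp [h, asymm h, h.ne']
    rw [hsym, hdiag] at hall
    ring_nf
    ring_nf at hall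
    linarith
  -- number of -1 entries as a double sum
  have hN : (numNegOnes B : ℤ) = ∑ i : Fin n, ∑ k : Fin n, (if B i k = -1 then (1:ℤ) else 0) := by
    rw [numNegOnes, Finset.card_filter]
    push_cast
    rw [Fintype.sum_prod_type]
  -- per-row: sum over k<l of B i k * B i l equals minus number of -1's in row i
  have hrowD : ∀ i : Fin n,
      (∑ k : Fin n, ∑ l : Fin n, (if k < l then B i k * B i l else 0))
        = - ∑ k : Fin n, (if B i k = -1 then (1:ℤ) else 0) := by
    intro i
    have hsym : (∑ k : Fin n, ∑ l : Fin n, (if l < k then B i k * B i l else 0))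
        = ∑ k : Fin n, ∑ l : Fin n, (if k < l then B i k * B i l else 0) := by
      rw [Finset.sum_comm]
      refine Finset.sum_congr rfl fun k _ => Finset.sum_congr rfl fun l _ => ?_
      rw [mul_comm]
    have hdiag : (∑ k : Fin n, ∑ l : Fin n, (if k = l then B i k * B i l else 0))
        = 2 * (∑ k : Fin n, (if B i k = -1 then (1:ℤ) else 0)) + 1 := by
      have h1 : (∑ k : Fin n, ∑ l : Fin n, (if k = l then B i k * B i l else 0))
          = ∑ k : Fin n, B i k * B i k := by
        simp [Finset.sum_ite_eq]
      rw [h1]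
      calc ∑ k : Fin n, B i k * B i k
          = ∑ k : Fin n, (2 * (if B i k = -1 then (1:ℤ) else 0) + B i k) :=
            Finset.sum_congr rfl fun k _ => hsq i k
        _ = 2 * (∑ k : Fin n, (if B i k = -1 then (1:ℤ) else 0)) + 1 := by
            rw [Finset.sum_add_distrib, ← Finset.mul_sum, hrow i]
    have hall : (∑ k : Fin n, ∑ l : Fin n, (if k < l then B i k * B i l else 0))
        + ((∑ k : Fin n, ∑ l : Fin n, (if l < k then B i k * B i l else 0))
        + (∑ k : Fin n, ∑ l : Fin n, (if k = l then B i k * B i l else 0))) = 1 := by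
      simp_rw [← Finset.sum_add_distrib]
      have : (1:ℤ) = (∑ k : Fin n, B i k) * (∑ l : Fin n, B i l) := by rw [hrow i]; ring
      rw [this, Finset.sum_mul_sum]
      refine Finset.sum_congr rfl fun k _ => Finset.sum_congr rfl fun l _ => ?_
      rcases lt_trichotomy k l with h | h | h
      · simp [h, asymm h, h.ne]
      · simp [h]
      · simp [h, asymm h, h.ne']
    rw [hsym, hdiag] at hall
    linarith
  -- total sum T with only the k < l condition
  have hT : (∑ i : Fin n, ∑ j : Fin n, ∑ k : Fin n, ∑ l : Fin n,
      (if k < l then B i k * B j l else 0)) = S := by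
    have step1 : ∀ i : Fin n, (∑ j : Fin n, ∑ k : Fin n, ∑ l : Fin n,
        (if k < l then B i k * B j l else 0))
        = ∑ k : Fin n, ∑ l : Fin n, (if k < l then B i k else 0) := by
      intro i
      rw [Finset.sum_comm]
      refine Finset.sum_congr rfl fun k _ => ?_
      rw [Finset.sum_comm]
      refine Finset.sum_congr rfl fun l _ => ?_
      by_cases h : k < l
      · simp only [if_pos h]
        rw [← Finset.mul_sum, hcol l, mul_one]
      · simp [h]
    calc (∑ i : Fin n, ∑ j : Fin n, ∑ k : Fin n, ∑ l : Fin n,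
        (if k < l then B i k * B j l else 0))
        = ∑ i : Fin n, ∑ k : Fin n, ∑ l : Fin n, (if k < l then B i k else 0) :=
          Finset.sum_congr rfl fun i _ => step1 i
      _ = S := by
          rw [Finset.sum_comm]
          refine Finset.sum_congr rfl fun k _ => ?_
          rw [Finset.sum_comm]
          refine Finset.sum_congr rfl fun l _ => ?_
          by_cases h : k < l
          · simp only [if_pos h]
            rw [hcol k]
          · simp [h]
  -- asmInv rewritten via swapping i and j
  have hInv : asmInv B = ∑ i : Fin n, ∑ j : Fin n, ∑ k : Fin n, ∑ l : Fin n,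
      (if j < i ∧ k < l then B i k * B j l else 0) := by
    rw [asmInv]; exact Finset.sum_comm
  -- diagonal part i = j
  have hDiagEq : (∑ i : Fin n, ∑ j : Fin n, ∑ k : Fin n, ∑ l : Fin n,
      (if i = j ∧ k < l then B i k * B j l else 0))
      = ∑ i : Fin n, ∑ k : Fin n, ∑ l : Fin n, (if k < l then B i k * B i l else 0) := by
    refine Finset.sum_congr rfl fun i _ => ?_
    rw [Finset.sum_eq_single i]
    · simp
    · intro j _ hj
      have : i ≠ j := fun h => hj h.symm
      simp [this]
    · intro h; exact absurd (Finset.mem_univ i) h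
  -- split T into three parts
  have hsplit : (∑ i : Fin n, ∑ j : Fin n, ∑ k : Fin n, ∑ l : Fin n,
        (if j < i ∧ k < l then B i k * B j l else 0))
      + ((∑ i : Fin n, ∑ j : Fin n, ∑ k : Fin n, ∑ l : Fin n,
        (if i < j ∧ k < l then B i k * B j l else 0))
      + (∑ i : Fin n, ∑ j : Fin n, ∑ k : Fin n, ∑ l : Fin n,
        (if i = j ∧ k < l then B i k * B j l else 0)))
      = ∑ i : Fin n, ∑ j : Fin n, ∑ k : Fin n, ∑ l : Fin n,
        (if k < l then B i k * B j l else 0) := by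
    simp_rw [← Finset.sum_add_distrib]
    refine Finset.sum_congr rfl fun i _ => Finset.sum_congr rfl fun j _ =>
      Finset.sum_congr rfl fun k _ => Finset.sum_congr rfl fun l _ => ?_
    rcases lt_trichotomy i j with h | h | h
    · simp [h, asymm h, h.ne]
    · simp [h]
    · simp [h, asymm h, h.ne']
  -- combine everything
  have hDiagVal : (∑ i : Fin n, ∑ k : Fin n, ∑ l : Fin n,
      (if k < l then B i k * B i l else 0)) = - (numNegOnes B : ℤ) := by
    rw [hN, ← Finset.sum_neg_distrib]
    exact Finset.sum_congr rfl fun i _ => hrowD i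
  rw [hT, hDiagEq, hDiagVal, ← hInv] at hsplit
  have hDual : asmDualInv B = ∑ i : Fin n, ∑ j : Fin n, ∑ k : Fin n, ∑ l : Fin n,
      (if i < j ∧ k < l then B i k * B j l else 0) := rfl
  rw [← hDual] at hsplit
  have hSval : (n : ℤ) * ((n : ℤ) - 1) / 2 = S := by
    rw [← htot]; exact Int.mul_ediv_cancel_left S two_ne_zero
  rw [hSval]
  linarith
end

section
/- For every alternating sign matrix B of size n, 2·I(B) ≥ N(B), where I(B) is the inversion number and N(B) is the number of entries of B equal to −1. Equivalently, the weak inversion number H(B) = I(B) − N(B)/2 is nonnegative. -/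
namespace ASMAux

variable {n : ℕ}

/-- row partial sums -/
def rps (B : Matrix (Fin n) (Fin n) ℤ) (i k : Fin n) : ℤ := ∑ q ∈ Finset.Iic k, B i q
/-- column partial sums -/
def cps (B : Matrix (Fin n) (Fin n) ℤ) (i k : Fin n) : ℤ := ∑ p ∈ Finset.Iic i, B p k

lemma iic_union_ioi (k : Fin n) : Finset.Iic k ∪ Finset.Ioi k = Finset.univ := by
  ext x; simp [le_or_gt]

lemma sum_Ioi (f : Fin n → ℤ) (h : ∑ x, f x = 1) (k : Fin n) :
    ∑ x ∈ Finset.Ioi k, f x = 1 - ∑ x ∈ Finset.Iic k, f x := by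
  have hd : Disjoint (Finset.Iic k) (Finset.Ioi k) := by
    simp only [Finset.disjoint_left, Finset.mem_Iic, Finset.mem_Ioi]
    intro a ha; exact not_lt.2 ha
  have h2 := Finset.sum_union hd (f := f)
  rw [iic_union_ioi, h] at h2
  linarith

lemma sum_Iio_mem (f : Fin n → ℤ)
    (h : ∀ j, (∑ q ∈ Finset.Iic j, f q) = 0 ∨ (∑ q ∈ Finset.Iic j, f q) = 1)
    (k : Fin n) : (∑ q ∈ Finset.Iio k, f q) = 0 ∨ (∑ q ∈ Finset.Iio k, f q) = 1 := by
  by_cases hk : k.val = 0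
  · left
    have he : Finset.Iio k = ∅ := by
      ext x; simp only [Finset.mem_Iio, Finset.notMem_empty, iff_false, Fin.lt_def]; omega
    simp [he]
  · have hlt : k.val - 1 < n := by omega
    have he : Finset.Iio k = Finset.Iic ⟨k.val - 1, hlt⟩ := by
      ext x; simp only [Finset.mem_Iio, Finset.mem_Iic, Fin.lt_def, Fin.le_def]; omega
    rw [he]; exact h _

lemma asmInv_eq (B : Matrix (Fin n) (Fin n) ℤ) (hB : IsASM B) :
    asmInv B = (∑ i : Fin n, ∑ k : Fin n, rps B i k * cps B i k) - n := by
  obtain ⟨hent, hrow, hcol, hrow1, hcol1⟩ := hB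
  have step1 : asmInv B = ∑ i : Fin n, ∑ j : Fin n, ∑ k : Fin n,
      (if i < j then B j k * (1 - rps B i k) else 0) := by
    unfold asmInv
    refine Finset.sum_congr rfl fun i _ => Finset.sum_congr rfl fun j _ =>
      Finset.sum_congr rfl fun k _ => ?_
    have h1 : ∑ l, (if k < l then B i l else 0) = 1 - rps B i k := by
      rw [← Finset.sum_filter]
      have hf : Finset.univ.filter (fun l => k < l) = Finset.Ioi k := by ext; simp
      rw [hf, sum_Ioi _ (hrow1 i) k]; rfl
    by_cases hij : i < j
    · simp only [hij, true_and, if_true]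
      have h2 : ∀ l, (if k < l then B j k * B i l else 0)
          = B j k * (if k < l then B i l else 0) := by
        intro l; by_cases h : k < l <;> simp [h]
      rw [Finset.sum_congr rfl fun l _ => h2 l, ← Finset.mul_sum, h1]
    · simp [hij]
  have step2 : asmInv B = ∑ j : Fin n, ∑ k : Fin n,
      ((j.val : ℤ) * B j k - B j k * ∑ i ∈ Finset.Iio j, rps B i k) := by
    rw [step1, Finset.sum_comm]
    refine Finset.sum_congr rfl fun j _ => ?_
    rw [Finset.sum_comm]
    refine Finset.sum_congr rfl fun k _ => ?_
    rw [← Finset.sum_filter]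
    have hf : Finset.univ.filter (fun i => i < j) = Finset.Iio j := by ext; simp
    rw [hf, ← Finset.mul_sum, Finset.sum_sub_distrib, Finset.sum_const]
    have hc2 : (Finset.Iio j).card = j.val := by simp
    rw [hc2, nsmul_eq_mul, mul_one]
    ring
  have stepA : ∑ j : Fin n, ∑ k : Fin n, (j.val : ℤ) * B j k = ∑ j : Fin n, (j.val : ℤ) := by
    refine Finset.sum_congr rfl fun j _ => ?_
    rw [← Finset.mul_sum, hrow1 j, mul_one]
  have stepB : ∑ j : Fin n, ∑ k : Fin n, B j k * ∑ i ∈ Finset.Iio j, rps B i k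
      = (∑ i : Fin n, ∑ k : Fin n, rps B i k)
        - ∑ i : Fin n, ∑ k : Fin n, rps B i k * cps B i k := by
    have h3 : ∀ (j k : Fin n), B j k * ∑ i ∈ Finset.Iio j, rps B i k
        = ∑ i : Fin n, (if i < j then B j k * rps B i k else 0) := by
      intro j k
      rw [Finset.mul_sum, ← Finset.sum_filter]
      have hf : Finset.univ.filter (fun i => i < j) = Finset.Iio j := by ext; simp
      rw [hf]
    calc ∑ j : Fin n, ∑ k : Fin n, B j k * ∑ i ∈ Finset.Iio j, rps B i k
        = ∑ j : Fin n, ∑ k : Fin n, ∑ i : Fin n, (if i < j then B j k * rps B i k else 0) :=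
          Finset.sum_congr rfl fun j _ => Finset.sum_congr rfl fun k _ => h3 j k
      _ = ∑ k : Fin n, ∑ j : Fin n, ∑ i : Fin n, (if i < j then B j k * rps B i k else 0) :=
          Finset.sum_comm
      _ = ∑ k : Fin n, ∑ i : Fin n, ∑ j : Fin n, (if i < j then B j k * rps B i k else 0) :=
          Finset.sum_congr rfl fun k _ => Finset.sum_comm
      _ = ∑ i : Fin n, ∑ k : Fin n, ∑ j : Fin n, (if i < j then B j k * rps B i k else 0) :=
          Finset.sum_comm
      _ = ∑ i : Fin n, ∑ k : Fin n, (rps B i k - rps B i k * cps B i k) := by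
          refine Finset.sum_congr rfl fun i _ => Finset.sum_congr rfl fun k _ => ?_
          rw [← Finset.sum_filter]
          have hf : Finset.univ.filter (fun j => i < j) = Finset.Ioi i := by ext; simp
          rw [hf, ← Finset.sum_mul, sum_Ioi (fun p => B p k) (hcol1 k) i]
          show (1 - cps B i k) * rps B i k = _
          ring
      _ = _ := by simp [Finset.sum_sub_distrib]
  have stepC : ∑ i : Fin n, ∑ k : Fin n, rps B i k = ∑ k : Fin n, ((k.val : ℤ) + 1) := by
    rw [Finset.sum_comm]
    refine Finset.sum_congr rfl fun k _ => ?_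
    calc ∑ i : Fin n, rps B i k = ∑ i : Fin n, ∑ q ∈ Finset.Iic k, B i q := rfl
      _ = ∑ q ∈ Finset.Iic k, ∑ i : Fin n, B i q := Finset.sum_comm
      _ = ∑ q ∈ Finset.Iic k, (1 : ℤ) := Finset.sum_congr rfl fun q _ => hcol1 q
      _ = ((k.val : ℤ) + 1) := by rw [Finset.sum_const]; simp
  have hsum : ∑ k : Fin n, ((k.val : ℤ) + 1) = (∑ k : Fin n, (k.val : ℤ)) + n := by
    rw [Finset.sum_add_distrib, Finset.sum_const, Finset.card_univ, Fintype.card_fin]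
    simp
  rw [step2]
  simp only [Finset.sum_sub_distrib]
  rw [stepA, stepB, stepC, hsum]
  ring

end ASMAux

theorem two_mul_inv_ge_numNegOnes {n : ℕ} (B : Matrix (Fin n) (Fin n) ℤ)
    (hB : IsASM B) :
    2 * asmInv B ≥ (numNegOnes B : ℤ) := by
  obtain ⟨hent, hrow, hcol, hrow1, hcol1⟩ := hB
  have key := ASMAux.asmInv_eq B ⟨hent, hrow, hcol, hrow1, hcol1⟩
  have hr01 : ∀ i k, ASMAux.rps B i k = 0 ∨ ASMAux.rps B i k = 1 := fun i k => hrow i k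
  have hc01 : ∀ i k, ASMAux.cps B i k = 0 ∨ ASMAux.cps B i k = 1 := fun i k => hcol i k
  have hposr : ∀ i k, B i k = 1 → ASMAux.rps B i k = 1 := by
    intro i k h1
    have hio := ASMAux.sum_Iio_mem (fun q => B i q) (hrow i) k
    have hins : ASMAux.rps B i k = B i k + ∑ q ∈ Finset.Iio k, B i q := by
      show ∑ q ∈ Finset.Iic k, B i q = _
      rw [← Finset.Iio_insert k, Finset.sum_insert (by simp)]
    rcases hr01 i k with h | h <;> rcases hio with h2 | h2 <;> omega
  have hposc : ∀ i k, B i k = 1 → ASMAux.cps B i k = 1 := by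
    intro i k h1
    have hio := ASMAux.sum_Iio_mem (fun p => B p k) (fun j => hcol j k) i
    have hins : ASMAux.cps B i k = B i k + ∑ p ∈ Finset.Iio i, B p k := by
      show ∑ p ∈ Finset.Iic i, B p k = _
      rw [← Finset.Iio_insert i, Finset.sum_insert (by simp)]
    rcases hc01 i k with h | h <;> rcases hio with h2 | h2 <;> omega
  have htot : ∑ p : Fin n × Fin n, B p.1 p.2 = (n : ℤ) := by
    rw [Fintype.sum_prod_type]
    simp [hrow1]
  have hptw : ∀ p : Fin n × Fin n, B p.1 p.2 =
      (if B p.1 p.2 = 1 then (1:ℤ) else 0) - (if B p.1 p.2 = -1 then (1:ℤ) else 0) := by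
    intro p; rcases hent p.1 p.2 with h | h | h <;> simp [h]
  have hcard : ((Finset.univ.filter fun p : Fin n × Fin n => B p.1 p.2 = 1).card : ℤ)
      = n + numNegOnes B := by
    have h4 : ∑ p : Fin n × Fin n, B p.1 p.2
        = ((Finset.univ.filter fun p : Fin n × Fin n => B p.1 p.2 = 1).card : ℤ)
          - ((Finset.univ.filter fun p : Fin n × Fin n => B p.1 p.2 = -1).card : ℤ) := by
      rw [Finset.sum_congr rfl fun p _ => hptw p, Finset.sum_sub_distrib]
      simp [Finset.sum_boole]
    rw [htot] at h4
    unfold numNegOnes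
    linarith
  have hge : ((Finset.univ.filter fun p : Fin n × Fin n => B p.1 p.2 = 1).card : ℤ)
      ≤ ∑ i : Fin n, ∑ k : Fin n, ASMAux.rps B i k * ASMAux.cps B i k := by
    have heq : ∑ p : Fin n × Fin n, ASMAux.rps B p.1 p.2 * ASMAux.cps B p.1 p.2
        = ∑ i : Fin n, ∑ k : Fin n, ASMAux.rps B i k * ASMAux.cps B i k :=
      Fintype.sum_prod_type _
    rw [← heq]
    have h5 : ∀ p ∈ (Finset.univ.filter fun p : Fin n × Fin n => B p.1 p.2 = 1),
        ASMAux.rps B p.1 p.2 * ASMAux.cps B p.1 p.2 = 1 := by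
      intro p hp
      rw [Finset.mem_filter] at hp
      rw [hposr p.1 p.2 hp.2, hposc p.1 p.2 hp.2, mul_one]
    calc ((Finset.univ.filter fun p : Fin n × Fin n => B p.1 p.2 = 1).card : ℤ)
        = ∑ p ∈ (Finset.univ.filter fun p : Fin n × Fin n => B p.1 p.2 = 1),
            ASMAux.rps B p.1 p.2 * ASMAux.cps B p.1 p.2 := by
          rw [Finset.sum_congr rfl h5]; simp
      _ ≤ ∑ p : Fin n × Fin n, ASMAux.rps B p.1 p.2 * ASMAux.cps B p.1 p.2 :=
          Finset.sum_le_sum_of_subset_of_nonneg (Finset.filter_subset _ _)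
            (fun p _ _ => by
              rcases hr01 p.1 p.2 with h | h <;> rcases hc01 p.1 p.2 with h' | h' <;>
                simp [h, h'])
  have hN : (0:ℤ) ≤ (numNegOnes B : ℤ) := Int.natCast_nonneg _
  rw [ge_iff_le, key]
  linarith
end

section
/- For every alternating sign matrix A of size n, 2·I(A) − N(A) ≤ n(n−1), and equality 2·I(A) − N(A) = n(n−1) holds if and only if A = w₀, the permutation matrix of the reverse permutation i ↦ n−i+1. Equivalently, the maximum of the weak inversion number H(A) = I(A) − N(A)/2 over 𝒜_n is n(n−1)/2, attained exactly at A = w₀. -/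
/-- The permutation matrix of the reverse permutation `i ↦ n - i + 1`. -/
def w0Matrix (n : ℕ) : Matrix (Fin n) (Fin n) ℤ :=
  fun i j => if j = i.rev then 1 else 0

namespace ASMaux

variable {n : ℕ}

def rowP (A : Matrix (Fin n) (Fin n) ℤ) (j l : Fin n) : ℤ := ∑ k ∈ Finset.Iio l, A j k
def colP (A : Matrix (Fin n) (Fin n) ℤ) (j l : Fin n) : ℤ := ∑ i ∈ Finset.Iio j, A i l

lemma filter_lt_eq_Iio (m : Fin n) : Finset.univ.filter (· < m) = Finset.Iio m := by
  ext k; simp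

lemma sum_Iio_add_sum_Ici (f : Fin n → ℤ) (m : Fin n) :
    (∑ k ∈ Finset.Iio m, f k) + ∑ k ∈ Finset.Ici m, f k = ∑ k, f k := by
  rw [← Finset.sum_filter_add_sum_filter_not Finset.univ (· < m) f]
  congr 1
  · rw [filter_lt_eq_Iio]
  · congr 1; ext k; simp
lemma sum_Iic_add_sum_Ioi (f : Fin n → ℤ) (m : Fin n) :
    (∑ k ∈ Finset.Iic m, f k) + ∑ k ∈ Finset.Ioi m, f k = ∑ k, f k := by
  rw [← Finset.sum_filter_add_sum_filter_not Finset.univ (· ≤ m) f]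
  congr 1
  · congr 1; ext k; simp
  · congr 1; ext k; simp

lemma sum_Iic_eq (f : Fin n → ℤ) (m : Fin n) :
    (∑ k ∈ Finset.Iic m, f k) = f m + ∑ k ∈ Finset.Iio m, f k := by
  rw [← Finset.Iio_insert, Finset.sum_insert (by simp)]

lemma sum_Iio_mem (f : Fin n → ℤ)
    (h : ∀ j, (∑ k ∈ Finset.Iic j, f k) = 0 ∨ (∑ k ∈ Finset.Iic j, f k) = 1) (j : Fin n) :
    (∑ k ∈ Finset.Iio j, f k) = 0 ∨ (∑ k ∈ Finset.Iio j, f k) = 1 := by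
  rcases Nat.eq_zero_or_pos j.val with h0 | h0
  · left
    have : Finset.Iio j = ∅ := by
      ext k; simp only [Finset.mem_Iio, Finset.notMem_empty, iff_false, Fin.lt_def, h0]
      omega
    simp [this]
  · have hlt : j.val - 1 < n := by omega
    have : Finset.Iio j = Finset.Iic ⟨j.val - 1, hlt⟩ := by
      ext k; simp only [Finset.mem_Iio, Finset.mem_Iic, Fin.lt_def, Fin.le_def]
      omega
    rw [this]; exact h _

lemma asmInv_eq (A : Matrix (Fin n) (Fin n) ℤ) :
    asmInv A = ∑ j : Fin n, ∑ l : Fin n, rowP A j l * colP A j l := by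
  unfold asmInv
  have step1 : ∀ i j : Fin n,
      (∑ k : Fin n, ∑ l : Fin n, if i < j ∧ k < l then A j k * A i l else 0)
        = if i < j then ∑ l : Fin n, rowP A j l * A i l else 0 := by
    intro i j
    by_cases h : i < j
    · simp only [h, true_and, if_pos]
      rw [Finset.sum_comm]
      refine Finset.sum_congr rfl fun l _ => ?_
      rw [rowP, Finset.sum_mul, ← filter_lt_eq_Iio l, Finset.sum_filter]
    · simp [h]
  simp only [step1]
  rw [Finset.sum_comm]
  refine Finset.sum_congr rfl fun j _ => ?_
  rw [← Finset.sum_filter, filter_lt_eq_Iio, Finset.sum_comm]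
  refine Finset.sum_congr rfl fun l _ => ?_
  rw [colP, Finset.mul_sum]

lemma numNegOnes_eq (A : Matrix (Fin n) (Fin n) ℤ) :
    (numNegOnes A : ℤ) = ∑ j : Fin n, ∑ l : Fin n, (if A j l = -1 then (1 : ℤ) else 0) := by
  unfold numNegOnes
  rw [Finset.card_filter]
  push_cast
  rw [Fintype.sum_prod_type]

variable {A : Matrix (Fin n) (Fin n) ℤ}

lemma rowP_mem (hA : IsASM A) (j l : Fin n) : rowP A j l = 0 ∨ rowP A j l = 1 :=
  sum_Iio_mem _ (hA.2.1 j) l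

lemma colP_mem (hA : IsASM A) (j l : Fin n) : colP A j l = 0 ∨ colP A j l = 1 :=
  sum_Iio_mem (fun i => A i l) (fun i => hA.2.2.1 i l) j

lemma neg_entry (hA : IsASM A) {j l : Fin n} (h : A j l = -1) :
    rowP A j l = 1 ∧ colP A j l = 1 := by
  constructor
  · have h1 := hA.2.1 j l
    rw [sum_Iic_eq, h] at h1
    have h2 := rowP_mem hA j l
    rw [rowP] at h2 ⊢
    omega
  · have h1 := hA.2.2.1 j l
    rw [sum_Iic_eq, h] at h1
    have h2 := colP_mem hA j l
    rw [colP] at h2 ⊢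
    omega

lemma N_le_inv (hA : IsASM A) : (numNegOnes A : ℤ) ≤ asmInv A := by
  rw [numNegOnes_eq, asmInv_eq]
  refine Finset.sum_le_sum fun j _ => Finset.sum_le_sum fun l _ => ?_
  by_cases h : A j l = -1
  · obtain ⟨h1, h2⟩ := neg_entry hA h
    simp [h, h1, h2]
  · rw [if_neg h]
    rcases rowP_mem hA j l with h1 | h1 <;> rcases colP_mem hA j l with h2 | h2 <;>
      simp [h1, h2]

/-- Column-reversal of a matrix. -/
def colRev (A : Matrix (Fin n) (Fin n) ℤ) : Matrix (Fin n) (Fin n) ℤ := fun i j => A i j.rev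

lemma map_rev_Iic (j : Fin n) :
    (Finset.Iic j).map (Fin.revPerm (n := n)).toEmbedding = Finset.Ici j.rev := by
  ext x
  simp only [Finset.mem_map, Finset.mem_Iic, Finset.mem_Ici, Equiv.coe_toEmbedding,
    Fin.revPerm_apply]
  constructor
  · rintro ⟨a, ha, rfl⟩; exact Fin.rev_le_rev.mpr ha
  · intro hx
    refine ⟨x.rev, ?_, Fin.rev_rev x⟩
    have := Fin.rev_le_rev.mpr hx
    rwa [Fin.rev_rev] at this

lemma map_rev_Iio (j : Fin n) :
    (Finset.Iio j).map (Fin.revPerm (n := n)).toEmbedding = Finset.Ioi j.rev := by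
  ext x
  simp only [Finset.mem_map, Finset.mem_Iio, Finset.mem_Ioi, Equiv.coe_toEmbedding,
    Fin.revPerm_apply]
  constructor
  · rintro ⟨a, ha, rfl⟩; exact Fin.rev_lt_rev.mpr ha
  · intro hx
    refine ⟨x.rev, ?_, Fin.rev_rev x⟩
    have := Fin.rev_lt_rev.mpr hx
    rwa [Fin.rev_rev] at this


lemma isASM_colRev (hA : IsASM A) : IsASM (colRev A) := by
  obtain ⟨h1, h2, h3, h4, h5⟩ := hA
  refine ⟨fun i j => h1 i j.rev, fun i j => ?_, fun i j => h3 i j.rev, fun i => ?_, fun j => h5 j.rev⟩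
  · have hmap : (∑ k ∈ Finset.Iic j, colRev A i k) = ∑ k ∈ Finset.Ici j.rev, A i k := by
      rw [← map_rev_Iic, Finset.sum_map]
      rfl
    have hsplit := sum_Iio_add_sum_Ici (A i) j.rev
    have hIio := sum_Iio_mem (A i) (h2 i) j.rev
    rw [h4 i] at hsplit
    rw [hmap]
    omega
  · have : (∑ k, colRev A i k) = ∑ k, A i k := Equiv.sum_comp Fin.revPerm (A i)
    rw [this, h4 i]

lemma numNegOnes_colRev : numNegOnes (colRev A) = numNegOnes A := by
  unfold numNegOnes
  apply Finset.card_bij (fun p _ => (p.1, p.2.rev))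
  · intro p hp
    simp only [Finset.mem_filter, Finset.mem_univ, true_and] at hp ⊢
    exact hp
  · intro p hp q hq h
    simp only [Prod.mk.injEq] at h
    exact Prod.ext h.1 (Fin.rev_injective h.2)
  · intro p hp
    refine ⟨(p.1, p.2.rev), ?_, by simp [Fin.rev_rev]⟩
    simp only [Finset.mem_filter, Finset.mem_univ, true_and] at hp ⊢
    simpa [colRev, Fin.rev_rev] using hp

lemma col_calc (x : Fin n → ℤ) (hsum : (∑ i, x i) = 1)
    (hent : ∀ i, x i = -1 ∨ x i = 0 ∨ x i = 1) :
    (∑ j, x j * ∑ i ∈ Finset.Iio j, x i) = - ∑ j, (if x j = -1 then (1 : ℤ) else 0) := by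
  set P := ∑ j, x j * ∑ i ∈ Finset.Iio j, x i with hP
  have hswap : (∑ j, x j * ∑ i ∈ Finset.Ioi j, x i) = P := by
    rw [hP]
    simp only [Finset.mul_sum]
    rw [Finset.sum_comm' (s' := fun i => Finset.Iio i) (t' := Finset.univ) (by
      intro x y
      simp only [Finset.mem_univ, Finset.mem_Ioi, Finset.mem_Iio, true_and, and_true])]
    refine Finset.sum_congr rfl fun j _ => Finset.sum_congr rfl fun i _ => mul_comm _ _
  have hsq : (1 : ℤ) = 2 * P + ∑ j, x j * x j := by
    have expand : (∑ j, x j) * (∑ i, x i) = ∑ j, x j * ∑ i, x i := Finset.sum_mul _ _ _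
    have split : ∀ j : Fin n, (∑ i, x i) =
        (∑ i ∈ Finset.Iio j, x i) + (x j + ∑ i ∈ Finset.Ioi j, x i) := by
      intro j
      rw [← sum_Iio_add_sum_Ici (f := x) (m := j), ← Finset.Ioi_insert,
        Finset.sum_insert (by simp)]
    calc (1 : ℤ) = (∑ j, x j) * (∑ i, x i) := by rw [hsum]; ring
      _ = ∑ j, x j * ((∑ i ∈ Finset.Iio j, x i) + (x j + ∑ i ∈ Finset.Ioi j, x i)) := by
          rw [expand]
          exact Finset.sum_congr rfl fun j _ => by rw [← split j]
      _ = P + (∑ j, x j * x j) + ∑ j, x j * ∑ i ∈ Finset.Ioi j, x i := by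
          simp only [mul_add]
          rw [Finset.sum_add_distrib, Finset.sum_add_distrib]
          ring
      _ = 2 * P + ∑ j, x j * x j := by rw [hswap]; ring
  have hsq2 : (∑ j, x j * x j) = (∑ j, x j) + 2 * ∑ j, (if x j = -1 then (1 : ℤ) else 0) := by
    rw [Finset.mul_sum, ← Finset.sum_add_distrib]
    refine Finset.sum_congr rfl fun j _ => ?_
    rcases hent j with h | h | h <;> rw [h] <;> norm_num
  rw [hsum] at hsq2
  omega

/-- The key identity: `I(A) + I(colRev A) = Σ card(Iio j) + N(A)`. -/
lemma inv_add_inv_colRev (hA : IsASM A) :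
    asmInv A + asmInv (colRev A)
      = (∑ j : Fin n, ((Finset.Iio j).card : ℤ)) + numNegOnes A := by
  have hrowP : ∀ j l : Fin n, rowP (colRev A) j l = 1 - ∑ k ∈ Finset.Iic l.rev, A j k := by
    intro j l
    have hmap : rowP (colRev A) j l = ∑ k ∈ Finset.Ioi l.rev, A j k := by
      rw [rowP, ← map_rev_Iio, Finset.sum_map]
      rfl
    have hsplit := sum_Iic_add_sum_Ioi (A j) l.rev
    rw [hA.2.2.2.1 j] at hsplit
    rw [hmap]
    omega
  have hcolP : ∀ j l : Fin n, colP (colRev A) j l = colP A j l.rev := fun j l => rfl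
  have hAv : asmInv (colRev A)
      = ∑ j : Fin n, ∑ m : Fin n, (1 - ∑ k ∈ Finset.Iic m, A j k) * colP A j m := by
    rw [asmInv_eq]
    refine Finset.sum_congr rfl fun j _ => ?_
    rw [← Equiv.sum_comp (Fin.revPerm (n := n))
      (fun m => (1 - ∑ k ∈ Finset.Iic m, A j k) * colP A j m)]
    refine Finset.sum_congr rfl fun l _ => ?_
    rw [hrowP, hcolP]
    rfl
  have hrA : ∀ j m : Fin n, rowP A j m = (∑ k ∈ Finset.Iic m, A j k) - A j m := by
    intro j m
    rw [sum_Iic_eq, rowP]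
    ring
  rw [asmInv_eq, hAv, ← Finset.sum_add_distrib]
  have hmain : ∀ j : Fin n,
      ((∑ l, rowP A j l * colP A j l)
        + ∑ m, (1 - ∑ k ∈ Finset.Iic m, A j k) * colP A j m)
      = ∑ m, (1 - A j m) * colP A j m := by
    intro j
    rw [← Finset.sum_add_distrib]
    refine Finset.sum_congr rfl fun m _ => ?_
    rw [hrA]
    ring
  simp only [hmain]
  simp only [sub_mul, one_mul, Finset.sum_sub_distrib]
  have claim1 : (∑ j : Fin n, ∑ m : Fin n, colP A j m)
      = ∑ j : Fin n, ((Finset.Iio j).card : ℤ) := by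
    refine Finset.sum_congr rfl fun j _ => ?_
    simp only [colP]
    rw [Finset.sum_comm]
    rw [Finset.sum_congr rfl fun i (_ : i ∈ Finset.Iio j) => hA.2.2.2.1 i]
    simp
  have claim2 : (∑ j : Fin n, ∑ m : Fin n, A j m * colP A j m)
      = -(numNegOnes A : ℤ) := by
    rw [Finset.sum_comm]
    have : ∀ m : Fin n, (∑ j : Fin n, A j m * colP A j m)
        = - ∑ j : Fin n, (if A j m = -1 then (1 : ℤ) else 0) := by
      intro m
      exact col_calc (fun i => A i m) (hA.2.2.2.2 m) (fun i => hA.1 i m)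
    simp only [this]
    rw [Finset.sum_neg_distrib, neg_inj, numNegOnes_eq, Finset.sum_comm]
  rw [claim1, claim2]
  ring

lemma two_T : 2 * (∑ j : Fin n, ((Finset.Iio j).card : ℤ)) = (n : ℤ) * ((n : ℤ) - 1) := by
  have h1 : ∀ j : Fin n, ((Finset.Iio j).card : ℤ) = ((j : ℕ) : ℤ) := by
    intro j; rw [Fin.card_Iio]
  simp only [h1]
  rw [Fin.sum_univ_eq_sum_range (fun i => ((i : ℕ) : ℤ)) n]
  have h2 : (∑ i ∈ Finset.range n, ((i : ℕ) : ℤ)) = ((∑ i ∈ Finset.range n, i : ℕ) : ℤ) := by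
    push_cast; rfl
  rw [h2]
  have h4 : ((∑ i ∈ Finset.range n, i : ℕ) : ℤ) * 2 = ((n * (n - 1) : ℕ) : ℤ) := by
    exact_mod_cast congrArg (Nat.cast : ℕ → ℤ) (Finset.sum_range_id_mul_two n)
  rcases n with _ | m
  · simp
  · have h5 : (((m + 1) * (m + 1 - 1) : ℕ) : ℤ)
        = ((m + 1 : ℕ) : ℤ) * (((m + 1 : ℕ) : ℤ) - 1) := by
      push_cast
      ring
    rw [h5] at h4
    linarith

lemma eq_diag {B : Matrix (Fin n) (Fin n) ℤ} (hB : IsASM B) (hI : asmInv B = 0)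
    (hN : numNegOnes B = 0) : B = fun i j => if j = i then 1 else 0 := by
  have h01 : ∀ i j, B i j = 0 ∨ B i j = 1 := by
    intro i j
    have hno : B i j ≠ -1 := by
      intro h
      have hmem : (i, j) ∈ Finset.univ.filter fun p : Fin n × Fin n => B p.1 p.2 = -1 := by
        simp [h]
      rw [Finset.card_eq_zero.mp hN] at hmem
      simp at hmem
    rcases hB.1 i j with h | h | h
    · exact absurd h hno
    · exact Or.inl h
    · exact Or.inr h
  have hnn : ∀ i j, 0 ≤ B i j := fun i j => by rcases h01 i j with h | h <;> omega
  have hpos : ∀ a b c d : Fin n, 0 ≤ (if a < b ∧ c < d then B b c * B a d else 0) := by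
    intro a b c d
    split
    · exact mul_nonneg (hnn _ _) (hnn _ _)
    · exact le_refl 0
  have hterm : ∀ i j k l : Fin n, i < j → k < l → B j k * B i l = 0 := by
    intro i j k l hij hkl
    have h4 : (if i < j ∧ k < l then B j k * B i l else 0)
        ≤ ∑ l' : Fin n, (if i < j ∧ k < l' then B j k * B i l' else 0) :=
      Finset.single_le_sum (fun l' _ => hpos i j k l') (Finset.mem_univ l)
    have h3 : (∑ l' : Fin n, if i < j ∧ k < l' then B j k * B i l' else 0)
        ≤ ∑ k' : Fin n, ∑ l' : Fin n, (if i < j ∧ k' < l' then B j k' * B i l' else 0) :=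
      Finset.single_le_sum
        (fun k' _ => Finset.sum_nonneg fun l' _ => hpos i j k' l') (Finset.mem_univ k)
    have h2 : (∑ k' : Fin n, ∑ l' : Fin n, if i < j ∧ k' < l' then B j k' * B i l' else 0)
        ≤ ∑ j' : Fin n, ∑ k' : Fin n, ∑ l' : Fin n,
            (if i < j' ∧ k' < l' then B j' k' * B i l' else 0) :=
      Finset.single_le_sum
        (fun j' _ => Finset.sum_nonneg fun k' _ => Finset.sum_nonneg fun l' _ => hpos i j' k' l')
        (Finset.mem_univ j)
    have h1 : (∑ j' : Fin n, ∑ k' : Fin n, ∑ l' : Fin n,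
          if i < j' ∧ k' < l' then B j' k' * B i l' else 0) ≤ asmInv B := by
      unfold asmInv
      exact Finset.single_le_sum
        (fun i' _ => Finset.sum_nonneg fun j' _ => Finset.sum_nonneg fun k' _ =>
          Finset.sum_nonneg fun l' _ => hpos i' j' k' l')
        (Finset.mem_univ i)
    have hch := le_trans (le_trans h4 h3) (le_trans h2 h1)
    rw [hI, if_pos ⟨hij, hkl⟩] at hch
    exact le_antisymm hch (mul_nonneg (hnn _ _) (hnn _ _))
  have hrow1 : ∀ i, (∑ k, B i k) = 1 := hB.2.2.2.1
  have hex : ∀ i : Fin n, ∃ m, B i m = 1 := by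
    intro i
    by_contra h
    push_neg at h
    have h0 : (∑ k, B i k) = 0 := Finset.sum_eq_zero fun k _ => (h01 i k).resolve_right (h k)
    rw [hrow1 i] at h0
    exact one_ne_zero h0
  choose σ hσ using hex
  have huniq : ∀ i m, B i m = 1 → m = σ i := by
    intro i m h
    by_contra hne
    have h2 : (∑ k ∈ ({m, σ i} : Finset (Fin n)), B i k) ≤ ∑ k, B i k :=
      Finset.sum_le_sum_of_subset_of_nonneg (Finset.subset_univ _) fun k _ _ => hnn i k
    rw [Finset.sum_pair hne, h, hσ i, hrow1 i] at h2
    omega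
  have hinj : Function.Injective σ := by
    intro a b hab
    by_contra hne
    have h2 : (∑ k ∈ ({a, b} : Finset (Fin n)), B k (σ a)) ≤ ∑ k, B k (σ a) :=
      Finset.sum_le_sum_of_subset_of_nonneg (Finset.subset_univ _) fun k _ _ => hnn k _
    have hba : B b (σ a) = 1 := by rw [hab]; exact hσ b
    rw [Finset.sum_pair hne, hσ a, hba, hB.2.2.2.2 (σ a)] at h2
    omega
  have hsmono : StrictMono σ := by
    intro a b hab
    have hle : σ a ≤ σ b := by
      by_contra h
      push_neg at h
      have := hterm a b (σ b) (σ a) hab h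
      rw [hσ a, hσ b] at this
      omega
    exact lt_of_le_of_ne hle fun h => absurd (hinj h) (ne_of_lt hab)
  have hwf : WellFoundedLT (Fin n) := inferInstance
  have hwf2 : WellFoundedGT (Fin n) := inferInstance
  have hid : ∀ i, σ i = i := fun i =>
    le_antisymm (hsmono.apply_le (x := i)) (hsmono.le_apply (x := i))
  funext i j
  by_cases h : j = i
  · subst h
    have h2 := hσ j
    rw [hid j] at h2
    simp [h2]
  · rw [if_neg h]
    rcases h01 i j with h0 | h0
    · exact h0
    · exact absurd ((huniq i j h0).trans (hid i)) h

lemma asmInv_diag : asmInv (fun i j : Fin n => if j = i then (1 : ℤ) else 0) = 0 := by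
  unfold asmInv
  refine Finset.sum_eq_zero fun i _ => Finset.sum_eq_zero fun j _ =>
    Finset.sum_eq_zero fun k _ => Finset.sum_eq_zero fun l _ => ?_
  by_cases h : i < j ∧ k < l
  · rw [if_pos h]
    by_cases hk : k = j
    · by_cases hl : l = i
      · subst hk; subst hl
        exact absurd (h.1.trans h.2) (lt_irrefl _)
      · simp [hl]
    · simp [hk]
  · rw [if_neg h]

lemma numNegOnes_diag : numNegOnes (fun i j : Fin n => if j = i then (1 : ℤ) else 0) = 0 := by
  unfold numNegOnes
  rw [Finset.card_eq_zero, Finset.filter_eq_empty_iff]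
  intro p _
  show ¬(if p.2 = p.1 then (1 : ℤ) else 0) = -1
  split <;> omega

end ASMaux

theorem weak_inversion_max {n : ℕ} (A : Matrix (Fin n) (Fin n) ℤ) (hA : IsASM A) :
    2 * asmInv A - (numNegOnes A : ℤ) ≤ (n : ℤ) * ((n : ℤ) - 1) ∧
      (2 * asmInv A - (numNegOnes A : ℤ) = (n : ℤ) * ((n : ℤ) - 1) ↔ A = w0Matrix n) := by
  classical
  have hB : IsASM (ASMaux.colRev A) := ASMaux.isASM_colRev hA
  have hidl := ASMaux.inv_add_inv_colRev hA
  have hNB : numNegOnes (ASMaux.colRev A) = numNegOnes A := ASMaux.numNegOnes_colRev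
  have hT := ASMaux.two_T (n := n)
  have key : 2 * asmInv A - (numNegOnes A : ℤ)
      = (n : ℤ) * ((n : ℤ) - 1)
        - (2 * asmInv (ASMaux.colRev A) - (numNegOnes (ASMaux.colRev A) : ℤ)) := by
    rw [hNB]
    linarith
  have h4 : (numNegOnes (ASMaux.colRev A) : ℤ) ≤ asmInv (ASMaux.colRev A) := ASMaux.N_le_inv hB
  have h5 : (0 : ℤ) ≤ (numNegOnes (ASMaux.colRev A) : ℤ) := Nat.cast_nonneg _
  refine ⟨by linarith, ?_, ?_⟩
  · intro h
    have hNz : (numNegOnes (ASMaux.colRev A) : ℤ) = 0 := by linarith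
    have hIz : asmInv (ASMaux.colRev A) = 0 := by linarith
    have hNz' : numNegOnes (ASMaux.colRev A) = 0 := by exact_mod_cast hNz
    have hdiag := ASMaux.eq_diag hB hIz hNz'
    funext i j
    have hthis := congrFun (congrFun hdiag i) j.rev
    simp only [ASMaux.colRev, Fin.rev_rev] at hthis
    rw [hthis]
    by_cases h2 : j = i.rev
    · simp [w0Matrix, h2, Fin.rev_rev]
    · have h3 : j.rev ≠ i := fun hh => h2 (by rw [← hh, Fin.rev_rev])
      simp [w0Matrix, h2, h3]
  · intro h
    subst h
    have hBd : ASMaux.colRev (w0Matrix n) = fun i j : Fin n => if j = i then (1 : ℤ) else 0 := by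
      funext i j
      simp [ASMaux.colRev, w0Matrix, Fin.rev_inj]
    rw [key, hBd, ASMaux.asmInv_diag, ASMaux.numNegOnes_diag]
    simp
end

section
/- If B covers A in ASM order on 𝒜_n, then 2·(I(B) − I(A)) − (N(B) − N(A)) ∈ {−2, −1, 0, 1, 2}; equivalently, the difference of weak inversion numbers H(B) − H(A) lies in {−1, −1/2, 0, 1/2, 1}, where H(A) = I(A) − N(A)/2. -/
namespace ASMAux

variable {n : ℕ}

abbrev Mat (n : ℕ) := Matrix (Fin n) (Fin n) ℤ

def cs (A : Mat n) (i j : ℕ) : ℤ :=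
  ∑ p : Fin n, ∑ q : Fin n, if (p:ℕ) < i ∧ (q:ℕ) < j then A p q else 0

lemma cs_zero_left (A : Mat n) (j : ℕ) : cs A 0 j = 0 := by simp [cs]

lemma cs_zero_right (A : Mat n) (i : ℕ) : cs A i 0 = 0 := by simp [cs]

lemma Iic_sum_eq (f : Fin n → ℤ) (m : ℕ) (hm : m < n) :
    (∑ q : Fin n, if (q:ℕ) < m+1 then f q else 0) = ∑ q ∈ Finset.Iic (⟨m, hm⟩ : Fin n), f q := by
  rw [← Finset.sum_filter]
  congr 1
  ext q
  simp [Nat.lt_succ_iff, Fin.le_def]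

lemma full_sum_eq (f : Fin n → ℤ) (m : ℕ) (hm : n ≤ m) :
    (∑ q : Fin n, if (q:ℕ) < m then f q else 0) = ∑ q, f q := by
  apply Finset.sum_congr rfl
  intro q _
  rw [if_pos (lt_of_lt_of_le q.isLt hm)]

lemma cs_succ_left (A : Mat n) (i : Fin n) (j : ℕ) :
    cs A ((i:ℕ)+1) j = cs A i j + ∑ q : Fin n, if (q:ℕ) < j then A i q else 0 := by
  unfold cs
  have key : ∀ p : Fin n, (∑ q : Fin n, if (p:ℕ) < (i:ℕ)+1 ∧ (q:ℕ) < j then A p q else 0)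
      = (∑ q : Fin n, if (p:ℕ) < (i:ℕ) ∧ (q:ℕ) < j then A p q else 0)
        + (if p = i then ∑ q : Fin n, if (q:ℕ) < j then A i q else 0 else 0) := by
    intro p
    rcases eq_or_ne p i with rfl | hpi
    · simp
    · have h1 : (p:ℕ) ≠ (i:ℕ) := fun hc => hpi (Fin.ext hc)
      have h2 : ((p:ℕ) < (i:ℕ)+1) ↔ ((p:ℕ) < (i:ℕ)) := by omega
      simp [hpi, h2]
  rw [Finset.sum_congr rfl (fun p _ => key p), Finset.sum_add_distrib,
    Finset.sum_ite_eq' Finset.univ i]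
  simp

lemma cs_succ_right (A : Mat n) (i : ℕ) (j : Fin n) :
    cs A i ((j:ℕ)+1) = cs A i j + ∑ p : Fin n, if (p:ℕ) < i then A p j else 0 := by
  unfold cs
  have key : ∀ p : Fin n, (∑ q : Fin n, if (p:ℕ) < i ∧ (q:ℕ) < (j:ℕ)+1 then A p q else 0)
      = (∑ q : Fin n, if (p:ℕ) < i ∧ (q:ℕ) < (j:ℕ) then A p q else 0)
        + (if (p:ℕ) < i then A p j else 0) := by
    intro p
    have key2 : ∀ q : Fin n, (if (p:ℕ) < i ∧ (q:ℕ) < (j:ℕ)+1 then A p q else 0)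
        = (if (p:ℕ) < i ∧ (q:ℕ) < (j:ℕ) then A p q else 0)
          + (if q = j then (if (p:ℕ) < i then A p q else 0) else 0) := by
      intro q
      rcases eq_or_ne q j with rfl | hqj
      · simp
      · have h1 : (q:ℕ) ≠ (j:ℕ) := fun hc => hqj (Fin.ext hc)
        have h2 : ((q:ℕ) < (j:ℕ)+1) ↔ ((q:ℕ) < (j:ℕ)) := by omega
        simp [hqj, h2]
    rw [Finset.sum_congr rfl (fun q _ => key2 q), Finset.sum_add_distrib,
      Finset.sum_ite_eq' Finset.univ j]
    simp
  rw [Finset.sum_congr rfl (fun p _ => key p), Finset.sum_add_distrib]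

end ASMAux
namespace ASMAux
variable {n : ℕ} {A B : Mat n}

lemma rowsum_bounds (hA : IsASM A) (i : Fin n) (j : ℕ) :
    0 ≤ (∑ q : Fin n, if (q:ℕ) < j then A i q else 0) ∧
      (∑ q : Fin n, if (q:ℕ) < j then A i q else 0) ≤ 1 := by
  rcases j with _ | m
  · simp
  rcases lt_or_ge m n with hm | hm
  · rw [Iic_sum_eq _ m hm]
    rcases hA.2.1 i ⟨m, hm⟩ with h | h <;> rw [h] <;> omega
  · rw [full_sum_eq _ _ (by omega), hA.2.2.2.1 i]
    omega

lemma colsum_bounds (hA : IsASM A) (j : Fin n) (i : ℕ) :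
    0 ≤ (∑ p : Fin n, if (p:ℕ) < i then A p j else 0) ∧
      (∑ p : Fin n, if (p:ℕ) < i then A p j else 0) ≤ 1 := by
  rcases i with _ | m
  · simp
  rcases lt_or_ge m n with hm | hm
  · rw [Iic_sum_eq _ m hm]
    rcases hA.2.2.1 ⟨m, hm⟩ j with h | h <;> rw [h] <;> omega
  · rw [full_sum_eq _ _ (by omega), hA.2.2.2.2 j]
    omega

lemma rowstep (hA : IsASM A) (i : Fin n) (j : ℕ) :
    cs A (i:ℕ) j ≤ cs A ((i:ℕ)+1) j ∧ cs A ((i:ℕ)+1) j ≤ cs A (i:ℕ) j + 1 := by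
  rw [cs_succ_left]
  have := rowsum_bounds hA i j
  omega

lemma colstep (hA : IsASM A) (i : ℕ) (j : Fin n) :
    cs A i (j:ℕ) ≤ cs A i ((j:ℕ)+1) ∧ cs A i ((j:ℕ)+1) ≤ cs A i (j:ℕ) + 1 := by
  rw [cs_succ_right]
  have := colsum_bounds hA j i
  omega

lemma cs_left_n (hA : IsASM A) : ∀ j : ℕ, j ≤ n → cs A n j = j := by
  intro j
  induction j with
  | zero => intro _; simp [cs_zero_right]
  | succ m ih =>
    intro hm
    have hmn : m < n := by omega
    have : ((⟨m, hmn⟩ : Fin n) : ℕ) = m := rfl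
    rw [← this, cs_succ_right, this, ih (by omega), full_sum_eq _ _ le_rfl,
      hA.2.2.2.2 ⟨m, hmn⟩]
    push_cast
    ring

lemma cs_right_n (hA : IsASM A) : ∀ i : ℕ, i ≤ n → cs A i n = i := by
  intro i
  induction i with
  | zero => intro _; simp [cs_zero_left]
  | succ m ih =>
    intro hm
    have hmn : m < n := by omega
    have : ((⟨m, hmn⟩ : Fin n) : ℕ) = m := rfl
    rw [← this, cs_succ_left, this, ih (by omega), full_sum_eq _ _ le_rfl,
      hA.2.2.2.1 ⟨m, hmn⟩]
    push_cast
    ring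

lemma cs_nonneg (hA : IsASM A) : ∀ j : ℕ, j ≤ n → ∀ i : ℕ, 0 ≤ cs A i j := by
  intro j
  induction j with
  | zero => intro _ i; simp [cs_zero_right]
  | succ m ih =>
    intro hm i
    have hmn : m < n := by omega
    have h1 := colstep (j := ⟨m, hmn⟩) hA i
    have h2 := ih (by omega) i
    simp only [Fin.val_mk] at h1 ⊢
    omega

lemma cs_mono_left (hA : IsASM A) (j : ℕ) :
    ∀ i' : ℕ, i' ≤ n → ∀ i : ℕ, i ≤ i' → cs A i j ≤ cs A i' j := by
  intro i'
  induction i' with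
  | zero =>
    intro _ i hi
    rw [Nat.le_zero.mp hi]
  | succ m ih =>
    intro hm i hi
    rcases Nat.lt_or_ge i (m+1) with hlt | hge
    · have hmn : m < n := by omega
      have h1 := rowstep (i := ⟨m, hmn⟩) hA j
      have h2 := ih (by omega) i (by omega)
      simp only [Fin.val_mk] at h1
      omega
    · have : i = m + 1 := by omega
      rw [this]

lemma cs_mono_right (hA : IsASM A) (i : ℕ) :
    ∀ j' : ℕ, j' ≤ n → ∀ j : ℕ, j ≤ j' → cs A i j ≤ cs A i j' := by
  intro j'
  induction j' with
  | zero =>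
    intro _ j hj
    rw [Nat.le_zero.mp hj]
  | succ m ih =>
    intro hm j hj
    rcases Nat.lt_or_ge j (m+1) with hlt | hge
    · have hmn : m < n := by omega
      have h1 := colstep (j := ⟨m, hmn⟩) hA i
      have h2 := ih (by omega) j (by omega)
      simp only [Fin.val_mk] at h1
      omega
    · have : j = m + 1 := by omega
      rw [this]

end ASMAux
namespace ASMAux
variable {n : ℕ} {A B : Mat n}

lemma entry_cs (A : Mat n) (p q : Fin n) :
    A p q = cs A ((p:ℕ)+1) ((q:ℕ)+1) - cs A (p:ℕ) ((q:ℕ)+1)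
      - cs A ((p:ℕ)+1) (q:ℕ) + cs A (p:ℕ) (q:ℕ) := by
  rw [cs_succ_left A p ((q:ℕ)+1), cs_succ_left A p (q:ℕ)]
  have key : ∀ l : Fin n, (if (l:ℕ) < (q:ℕ)+1 then A p l else 0)
      = (if (l:ℕ) < (q:ℕ) then A p l else 0) + (if l = q then A p l else 0) := by
    intro l
    rcases eq_or_ne l q with rfl | hlq
    · simp
    · have h1 : (l:ℕ) ≠ (q:ℕ) := fun hc => hlq (Fin.ext hc)
      have h2 : ((l:ℕ) < (q:ℕ)+1) ↔ ((l:ℕ) < (q:ℕ)) := by omega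
      simp [hlq, h2]
  rw [Finset.sum_congr rfl (fun l _ => key l), Finset.sum_add_distrib,
    Finset.sum_ite_eq' Finset.univ q]
  simp
  ring

lemma Iic_row_cs (A : Mat n) (i j : Fin n) :
    (∑ k ∈ Finset.Iic j, A i k) = cs A ((i:ℕ)+1) ((j:ℕ)+1) - cs A (i:ℕ) ((j:ℕ)+1) := by
  rw [cs_succ_left, ← Iic_sum_eq (fun k => A i k) (j:ℕ) j.isLt]
  simp

lemma Iic_col_cs (A : Mat n) (i j : Fin n) :
    (∑ k ∈ Finset.Iic i, A k j) = cs A ((i:ℕ)+1) ((j:ℕ)+1) - cs A ((i:ℕ)+1) (j:ℕ) := by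
  rw [cs_succ_right, ← Iic_sum_eq (fun k => A k j) (i:ℕ) i.isLt]
  simp

lemma corner_cs (A : Mat n) (i j : Fin n) :
    cornerSum A i j = cs A ((i:ℕ)+1) ((j:ℕ)+1) := by
  have key : ∀ p : Fin n, (∑ q : Fin n, if (p:ℕ) < (i:ℕ)+1 ∧ (q:ℕ) < (j:ℕ)+1 then A p q else 0)
      = if (p:ℕ) < (i:ℕ)+1 then (∑ q ∈ Finset.Iic j, A p q) else 0 := by
    intro p
    by_cases hp : (p:ℕ) < (i:ℕ)+1
    · rw [if_pos hp, ← Iic_sum_eq (fun q => A p q) (j:ℕ) j.isLt]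
      exact Finset.sum_congr rfl (fun q _ => by simp [hp])
    · rw [if_neg hp]
      exact Finset.sum_eq_zero (fun q _ => by simp [hp])
  have key2 : cs A ((i:ℕ)+1) ((j:ℕ)+1)
      = ∑ p : Fin n, if (p:ℕ) < (i:ℕ)+1 then (∑ q ∈ Finset.Iic j, A p q) else 0 :=
    Finset.sum_congr rfl (fun p _ => key p)
  rw [cornerSum, key2, Iic_sum_eq (fun p => ∑ q ∈ Finset.Iic j, A p q) (i:ℕ) i.isLt]

end ASMAux
namespace ASMAux
variable {n : ℕ} {A B : Mat n}

lemma sum_ind2 (a b : Fin n) (c : ℤ) :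
    (∑ p : Fin n, ∑ q : Fin n, if p = a ∧ q = b then c else 0) = c := by
  simp [ite_and, Finset.sum_ite_eq']

/-- `∑_{i<a, b<l} M i l = a - cs M a (b+1)`  for an ASM `M`. -/
lemma sum_lt_gt (hA : IsASM A) (a b : Fin n) :
    (∑ i : Fin n, ∑ l : Fin n, if i < a ∧ b < l then A i l else 0)
      = (a:ℕ) - cs A (a:ℕ) ((b:ℕ)+1) := by
  have key : ∀ i l : Fin n, (if i < a ∧ b < l then A i l else 0)
      = (if (i:ℕ) < (a:ℕ) ∧ (l:ℕ) < n then A i l else 0)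
        - (if (i:ℕ) < (a:ℕ) ∧ (l:ℕ) < (b:ℕ)+1 then A i l else 0) := by
    intro i l
    have h1 : (i < a) ↔ ((i:ℕ) < (a:ℕ)) := Iff.rfl
    have h2 : (b < l) ↔ ((b:ℕ) < (l:ℕ)) := Iff.rfl
    have h3 : (l:ℕ) < n := l.isLt
    split_ifs with u v w <;> simp_all <;> omega
  rw [Finset.sum_congr rfl (fun i _ => Finset.sum_congr rfl (fun l _ => key i l))]
  simp only [Finset.sum_sub_distrib]
  have e1 : (∑ i : Fin n, ∑ l : Fin n, if (i:ℕ) < (a:ℕ) ∧ (l:ℕ) < n then A i l else 0)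
      = cs A (a:ℕ) n := rfl
  have e2 : (∑ i : Fin n, ∑ l : Fin n, if (i:ℕ) < (a:ℕ) ∧ (l:ℕ) < (b:ℕ)+1 then A i l else 0)
      = cs A (a:ℕ) ((b:ℕ)+1) := rfl
  rw [e1, e2, cs_right_n hA (a:ℕ) (le_of_lt a.isLt)]

/-- `∑_{a<j, k<b} M j k = b - cs M (a+1) b` for an ASM `M`. -/
lemma sum_gt_lt (hA : IsASM A) (a b : Fin n) :
    (∑ j : Fin n, ∑ k : Fin n, if a < j ∧ k < b then A j k else 0)
      = (b:ℕ) - cs A ((a:ℕ)+1) (b:ℕ) := by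
  have key : ∀ j k : Fin n, (if a < j ∧ k < b then A j k else 0)
      = (if (j:ℕ) < n ∧ (k:ℕ) < (b:ℕ) then A j k else 0)
        - (if (j:ℕ) < (a:ℕ)+1 ∧ (k:ℕ) < (b:ℕ) then A j k else 0) := by
    intro j k
    have h3 : (j:ℕ) < n := j.isLt
    have h4 : (a:ℕ) < n := a.isLt
    have h1 : (a < j) ↔ ((a:ℕ) < (j:ℕ)) := Iff.rfl
    have h2 : (k < b) ↔ ((k:ℕ) < (b:ℕ)) := Iff.rfl
    split_ifs with u v w <;> simp_all <;> omega
  rw [Finset.sum_congr rfl (fun j _ => Finset.sum_congr rfl (fun k _ => key j k))]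
  simp only [Finset.sum_sub_distrib]
  have e1 : (∑ j : Fin n, ∑ k : Fin n, if (j:ℕ) < n ∧ (k:ℕ) < (b:ℕ) then A j k else 0)
      = cs A n (b:ℕ) := rfl
  have e2 : (∑ j : Fin n, ∑ k : Fin n, if (j:ℕ) < (a:ℕ)+1 ∧ (k:ℕ) < (b:ℕ) then A j k else 0)
      = cs A ((a:ℕ)+1) (b:ℕ) := rfl
  rw [e1, e2, cs_left_n hA (b:ℕ) (le_of_lt b.isLt)]

end ASMAux
namespace ASMAux
variable {n : ℕ}

lemma T1_eval (M : Mat n) (a b : Fin n) (c : ℤ) :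
    (∑ i : Fin n, ∑ j : Fin n, ∑ k : Fin n, ∑ l : Fin n,
        if i < j ∧ k < l then (if j = a ∧ k = b then c else 0) * M i l else 0)
      = c * ∑ i : Fin n, ∑ l : Fin n, if i < a ∧ b < l then M i l else 0 := by
  have step1 : ∀ i j k : Fin n,
      (∑ l : Fin n, if i < j ∧ k < l then (if j = a ∧ k = b then c else 0) * M i l else 0)
        = (if j = a ∧ k = b then c else 0) * (∑ l : Fin n, if i < j ∧ k < l then M i l else 0) := by
    intro i j k
    rw [Finset.mul_sum]
    exact Finset.sum_congr rfl (fun l _ => by split_ifs <;> ring)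
  have step2 : ∀ i : Fin n,
      (∑ j : Fin n, ∑ k : Fin n, (if j = a ∧ k = b then c else 0)
          * (∑ l : Fin n, if i < j ∧ k < l then M i l else 0))
        = c * (∑ l : Fin n, if i < a ∧ b < l then M i l else 0) := by
    intro i
    have inner : ∀ j : Fin n,
        (∑ k : Fin n, (if j = a ∧ k = b then c else 0)
            * (∑ l : Fin n, if i < j ∧ k < l then M i l else 0))
          = (if j = a then c * (∑ l : Fin n, if i < j ∧ b < l then M i l else 0) else 0) := by
      intro j
      rcases eq_or_ne j a with rfl | hj
      · simp [ite_mul, zero_mul, Finset.sum_ite_eq']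
      · simp [hj]
    rw [Finset.sum_congr rfl (fun j _ => inner j), Finset.sum_ite_eq' Finset.univ a]
    simp
  have step12 : ∀ i : Fin n,
      (∑ j : Fin n, ∑ k : Fin n, ∑ l : Fin n,
          if i < j ∧ k < l then (if j = a ∧ k = b then c else 0) * M i l else 0)
        = c * (∑ l : Fin n, if i < a ∧ b < l then M i l else 0) := by
    intro i
    rw [Finset.sum_congr rfl
      (fun j _ => Finset.sum_congr rfl (fun k _ => step1 i j k))]
    exact step2 i
  rw [Finset.sum_congr rfl (fun i _ => step12 i), ← Finset.mul_sum]

lemma T2_eval (M : Mat n) (a b : Fin n) (c : ℤ) :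
    (∑ i : Fin n, ∑ j : Fin n, ∑ k : Fin n, ∑ l : Fin n,
        if i < j ∧ k < l then M j k * (if i = a ∧ l = b then c else 0) else 0)
      = c * ∑ j : Fin n, ∑ k : Fin n, if a < j ∧ k < b then M j k else 0 := by
  have step1 : ∀ i j k : Fin n,
      (∑ l : Fin n, if i < j ∧ k < l then M j k * (if i = a ∧ l = b then c else 0) else 0)
        = (if i = a then (if a < j ∧ k < b then M j k * c else 0) else 0) := by
    intro i j k
    by_cases hi : i = a
    · subst hi
      have pt : ∀ l : Fin n,
          (if i < j ∧ k < l then M j k * (if i = i ∧ l = b then c else 0) else 0)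
            = (if l = b then (if i < j ∧ k < b then M j k * c else 0) else 0) := by
        intro l
        rcases eq_or_ne l b with rfl | hl
        · simp
        · simp [hl]
      rw [Finset.sum_congr rfl (fun l _ => pt l), Finset.sum_ite_eq' Finset.univ b]
      simp
    · rw [if_neg hi]
      exact Finset.sum_eq_zero (fun l _ => by simp [hi])
  have step12 : ∀ i : Fin n,
      (∑ j : Fin n, ∑ k : Fin n, ∑ l : Fin n,
          if i < j ∧ k < l then M j k * (if i = a ∧ l = b then c else 0) else 0)
        = (if i = a then (∑ j : Fin n, ∑ k : Fin n, if a < j ∧ k < b then M j k * c else 0)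
            else 0) := by
    intro i
    rw [Finset.sum_congr rfl
      (fun j _ => Finset.sum_congr rfl (fun k _ => step1 i j k))]
    by_cases hi : i = a <;> simp [hi]
  rw [Finset.sum_congr rfl (fun i _ => step12 i), Finset.sum_ite_eq' Finset.univ a]
  simp only [Finset.mem_univ, if_true]
  rw [Finset.mul_sum]
  exact Finset.sum_congr rfl (fun j _ => by
    rw [Finset.mul_sum]
    exact Finset.sum_congr rfl (fun k _ => by split_ifs <;> ring))

lemma ind_sum_lt_gt (a b p q : Fin n) (c : ℤ) :
    (∑ i : Fin n, ∑ l : Fin n, if i < a ∧ b < l then (if i = p ∧ l = q then c else 0) else 0)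
      = if p < a ∧ b < q then c else 0 := by
  have pt : ∀ i l : Fin n,
      (if i < a ∧ b < l then (if i = p ∧ l = q then c else 0) else 0)
        = (if i = p ∧ l = q then (if p < a ∧ b < q then c else 0) else 0) := by
    intro i l
    rcases eq_or_ne i p with rfl | hi
    · rcases eq_or_ne l q with rfl | hl
      · simp
      · simp [hl]
    · simp [hi]
  rw [Finset.sum_congr rfl (fun i _ => Finset.sum_congr rfl (fun l _ => pt i l)),
    sum_ind2]

lemma numNegOnes_sum (M : Mat n) :
    ((Finset.univ.filter fun p : Fin n × Fin n => M p.1 p.2 = -1).card : ℤ)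
      = ∑ p : Fin n, ∑ q : Fin n, if M p q = -1 then 1 else 0 := by
  rw [Finset.card_filter]
  push_cast
  rw [Fintype.sum_prod_type]

end ASMAux
namespace ASMAux
variable {n : ℕ} {A B : Mat n}

lemma le_cs (hle : asmLE A B) : ∀ i j : ℕ, i ≤ n → j ≤ n → cs B i j ≤ cs A i j := by
  intro i j hi hj
  rcases i with _ | i
  · simp [cs_zero_left]
  rcases j with _ | j
  · simp [cs_zero_right]
  have := hle ⟨i, by omega⟩ ⟨j, by omega⟩
  rwa [corner_cs, corner_cs] at this

lemma exists_good_cell (hA : IsASM A) (hB : IsASM B) (hlt : asmLT A B) :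
    ∃ i0 i1 j0 j1 : Fin n, (i1:ℕ) = (i0:ℕ)+1 ∧ (j1:ℕ) = (j0:ℕ)+1 ∧
      cs B (i1:ℕ) (j1:ℕ) < cs A (i1:ℕ) (j1:ℕ) ∧
      cs A (i1:ℕ) (j1:ℕ) = cs A (i0:ℕ) (j1:ℕ) + 1 ∧
      cs A ((i1:ℕ)+1) (j1:ℕ) = cs A (i1:ℕ) (j1:ℕ) ∧
      cs A (i1:ℕ) (j1:ℕ) = cs A (i1:ℕ) (j0:ℕ) + 1 ∧
      cs A (i1:ℕ) ((j1:ℕ)+1) = ASMAux.cs A (i1:ℕ) (j1:ℕ) := by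
  have hKpos : (2:ℤ) ≤ 2*(n:ℤ)+2 := by
    have : (0:ℤ) ≤ (n:ℤ) := Int.natCast_nonneg n
    linarith
  obtain ⟨i, j, hij⟩ : ∃ i j : Fin n, cs B ((i:ℕ)+1) ((j:ℕ)+1) < cs A ((i:ℕ)+1) ((j:ℕ)+1) := by
    have h2 := hlt.2
    unfold asmLE at h2
    push_neg at h2
    obtain ⟨i, j, hij⟩ := h2
    exact ⟨i, j, by rw [← corner_cs, ← corner_cs]; exact hij⟩
  set S : Finset (Fin n × Fin n) := Finset.univ.filter
    (fun p : Fin n × Fin n =>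
      cs B ((p.1:ℕ)+1) ((p.2:ℕ)+1) < cs A ((p.1:ℕ)+1) ((p.2:ℕ)+1)) with hSdef
  have hS : S.Nonempty := ⟨(i, j), by simp [hSdef, hij]⟩
  obtain ⟨p, hpS, hmax⟩ := Finset.exists_max_image S
    (fun p => (2*(n:ℤ)+2) * cs A ((p.1:ℕ)+1) ((p.2:ℕ)+1) - ((p.1:ℕ) + (p.2:ℕ) : ℕ)) hS
  obtain ⟨a, b⟩ := p
  simp only [hSdef, Finset.mem_filter, Finset.mem_univ, true_and] at hpS
  have hmax' : ∀ a' b' : Fin n,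
      cs B ((a':ℕ)+1) ((b':ℕ)+1) < cs A ((a':ℕ)+1) ((b':ℕ)+1) →
      (2*(n:ℤ)+2) * cs A ((a':ℕ)+1) ((b':ℕ)+1) - ((a':ℕ) + (b':ℕ) : ℕ)
        ≤ (2*(n:ℤ)+2) * cs A ((a:ℕ)+1) ((b:ℕ)+1) - ((a:ℕ) + (b:ℕ) : ℕ) := by
    intro a' b' hmem
    exact hmax (a', b') (by simp [hSdef, hmem])
  -- not in last row
  have ha1 : (a:ℕ)+1 < n := by
    by_contra hcon
    have han : (a:ℕ)+1 = n := by have := a.isLt; omega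
    rw [han, cs_left_n hA ((b:ℕ)+1) b.isLt, cs_left_n hB ((b:ℕ)+1) b.isLt] at hpS
    exact lt_irrefl _ hpS
  have hb1 : (b:ℕ)+1 < n := by
    by_contra hcon
    have hbn : (b:ℕ)+1 = n := by have := b.isLt; omega
    rw [hbn, cs_right_n hA ((a:ℕ)+1) a.isLt, cs_right_n hB ((a:ℕ)+1) a.isLt] at hpS
    exact lt_irrefl _ hpS
  refine ⟨a, ⟨(a:ℕ)+1, ha1⟩, b, ⟨(b:ℕ)+1, hb1⟩, rfl, rfl, hpS, ?_, ?_, ?_, ?_⟩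
  -- c2 : vertical step into the cell equals 1
  · have hstep := rowstep (A := A) hA a ((b:ℕ)+1)
    simp only [Fin.val_mk]
    by_contra hcon
    have hs0 : cs A ((a:ℕ)+1) ((b:ℕ)+1) = cs A (a:ℕ) ((b:ℕ)+1) := by omega
    rcases Nat.eq_zero_or_eq_succ_pred (a:ℕ) with ha0 | hasucc
    · have h0 : cs A ((a:ℕ)) ((b:ℕ)+1) = 0 := by rw [ha0, cs_zero_left]
      have hnn := cs_nonneg hB ((b:ℕ)+1) hb1.le ((a:ℕ)+1)
      omega
    · set m := (a:ℕ) - 1 with hm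
      have hma : (a:ℕ) = m + 1 := by omega
      have hmn : m < n := by omega
      have hmem : cs B ((m:ℕ)+1) ((b:ℕ)+1) < cs A ((m:ℕ)+1) ((b:ℕ)+1) := by
        rw [← hma]
        have hmono := cs_mono_left hB ((b:ℕ)+1) ((a:ℕ)+1) (by omega) (a:ℕ) (by omega)
        omega
      have := hmax' ⟨m, hmn⟩ b hmem
      simp only [Fin.val_mk] at this
      rw [← hma, hs0] at this
      have : ((m:ℤ) + (b:ℕ)) ≥ ((a:ℕ) + (b:ℕ)) := by push_cast at this ⊢; linarith
      omega
  -- c3 : vertical step out of the cell equals 0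
  · have hstep := rowstep (A := A) hA ⟨(a:ℕ)+1, ha1⟩ ((b:ℕ)+1)
    simp only [Fin.val_mk] at hstep ⊢
    by_contra hcon
    have hs1 : cs A ((a:ℕ)+1+1) ((b:ℕ)+1) = cs A ((a:ℕ)+1) ((b:ℕ)+1) + 1 := by omega
    have hmem : cs B ((a:ℕ)+1+1) ((b:ℕ)+1) < cs A ((a:ℕ)+1+1) ((b:ℕ)+1) := by
      have hstepB := rowstep (A := B) hB ⟨(a:ℕ)+1, ha1⟩ ((b:ℕ)+1)
      simp only [Fin.val_mk] at hstepB
      omega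
    have := hmax' ⟨(a:ℕ)+1, ha1⟩ b hmem
    simp only [Fin.val_mk] at this
    rw [hs1] at this
    push_cast at this
    linarith
  -- c4 : horizontal step into the cell equals 1
  · have hstep := colstep (A := A) hA ((a:ℕ)+1) b
    simp only [Fin.val_mk]
    by_contra hcon
    have hs0 : cs A ((a:ℕ)+1) ((b:ℕ)+1) = cs A ((a:ℕ)+1) (b:ℕ) := by omega
    rcases Nat.eq_zero_or_eq_succ_pred (b:ℕ) with hb0 | hbsucc
    · have h0 : cs A ((a:ℕ)+1) ((b:ℕ)) = 0 := by rw [hb0, cs_zero_right]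
      have hnn := cs_nonneg hB ((b:ℕ)+1) hb1.le ((a:ℕ)+1)
      omega
    · set m := (b:ℕ) - 1 with hm
      have hmb : (b:ℕ) = m + 1 := by omega
      have hmn : m < n := by omega
      have hmem : cs B ((a:ℕ)+1) ((m:ℕ)+1) < cs A ((a:ℕ)+1) ((m:ℕ)+1) := by
        rw [← hmb]
        have hmono := cs_mono_right hB ((a:ℕ)+1) ((b:ℕ)+1) (by omega) (b:ℕ) (by omega)
        omega
      have := hmax' a ⟨m, hmn⟩ hmem
      simp only [Fin.val_mk] at this
      rw [← hmb, hs0] at this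
      have : ((a:ℕ) + (m:ℤ)) ≥ ((a:ℕ) + (b:ℕ)) := by push_cast at this ⊢; linarith
      omega
  -- c5 : horizontal step out of the cell equals 0
  · have hstep := colstep (A := A) hA ((a:ℕ)+1) ⟨(b:ℕ)+1, hb1⟩
    simp only [Fin.val_mk] at hstep ⊢
    by_contra hcon
    have hs1 : cs A ((a:ℕ)+1) ((b:ℕ)+1+1) = cs A ((a:ℕ)+1) ((b:ℕ)+1) + 1 := by omega
    have hmem : cs B ((a:ℕ)+1) ((b:ℕ)+1+1) < cs A ((a:ℕ)+1) ((b:ℕ)+1+1) := by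
      have hstepB := colstep (A := B) hB ((a:ℕ)+1) ⟨(b:ℕ)+1, hb1⟩
      simp only [Fin.val_mk] at hstepB
      omega
    have := hmax' a ⟨(b:ℕ)+1, hb1⟩ hmem
    simp only [Fin.val_mk] at this
    rw [hs1] at this
    push_cast at this
    linarith

end ASMAux
namespace ASMAux
variable {n : ℕ}

/-- The local 2x2 perturbation pattern. -/
def Epat (i0 i1 j0 j1 : Fin n) : Mat n := fun p q =>
  (if p = i0 ∧ q = j0 then -1 else 0) + (if p = i0 ∧ q = j1 then 1 else 0)
  + (if p = i1 ∧ q = j0 then 1 else 0) + (if p = i1 ∧ q = j1 then -1 else 0)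

variable {i0 i1 j0 j1 : Fin n}

lemma cs_ind_gen (a b : Fin n) (c : ℤ) (i j : ℕ) :
    (∑ p : Fin n, ∑ q : Fin n,
        if (p:ℕ) < i ∧ (q:ℕ) < j then (if p = a ∧ q = b then c else 0) else 0)
      = if (a:ℕ) < i ∧ (b:ℕ) < j then c else 0 := by
  have pt : ∀ p q : Fin n,
      (if (p:ℕ) < i ∧ (q:ℕ) < j then (if p = a ∧ q = b then c else 0) else 0)
        = (if p = a ∧ q = b then (if (a:ℕ) < i ∧ (b:ℕ) < j then c else 0) else 0) := by
    intro p q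
    rcases eq_or_ne p a with rfl | hp
    · rcases eq_or_ne q b with rfl | hq
      · simp
      · simp [hq]
    · simp [hp]
  rw [Finset.sum_congr rfl (fun p _ => Finset.sum_congr rfl (fun q _ => pt p q)), sum_ind2]

lemma cs_Epat (hi : (i1:ℕ) = (i0:ℕ)+1) (hj : (j1:ℕ) = (j0:ℕ)+1) (i j : ℕ) :
    cs (Epat i0 i1 j0 j1) i j = if i = (i1:ℕ) ∧ j = (j1:ℕ) then -1 else 0 := by
  unfold cs Epat
  have pt : ∀ p q : Fin n,
      (if (p:ℕ) < i ∧ (q:ℕ) < j then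
          (if p = i0 ∧ q = j0 then (-1:ℤ) else 0) + (if p = i0 ∧ q = j1 then 1 else 0)
          + (if p = i1 ∧ q = j0 then 1 else 0) + (if p = i1 ∧ q = j1 then -1 else 0) else 0)
        = (if (p:ℕ) < i ∧ (q:ℕ) < j then (if p = i0 ∧ q = j0 then (-1:ℤ) else 0) else 0)
          + (if (p:ℕ) < i ∧ (q:ℕ) < j then (if p = i0 ∧ q = j1 then (1:ℤ) else 0) else 0)
          + (if (p:ℕ) < i ∧ (q:ℕ) < j then (if p = i1 ∧ q = j0 then (1:ℤ) else 0) else 0)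
          + (if (p:ℕ) < i ∧ (q:ℕ) < j then (if p = i1 ∧ q = j1 then (-1:ℤ) else 0) else 0) := by
    intro p q
    split_ifs <;> ring
  rw [Finset.sum_congr rfl (fun p _ => Finset.sum_congr rfl (fun q _ => pt p q))]
  simp only [Finset.sum_add_distrib]
  rw [cs_ind_gen, cs_ind_gen, cs_ind_gen, cs_ind_gen]
  have h0 : (i0:ℕ) < n := i0.isLt
  have h1 : (j0:ℕ) < n := j0.isLt
  split_ifs <;> omega

lemma cs_add (A E : Mat n) (i j : ℕ) : cs (A + E) i j = cs A i j + cs E i j := by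
  unfold cs
  rw [← Finset.sum_add_distrib]
  refine Finset.sum_congr rfl (fun p _ => ?_)
  rw [← Finset.sum_add_distrib]
  refine Finset.sum_congr rfl (fun q _ => ?_)
  simp only [Matrix.add_apply]
  split_ifs <;> ring

end ASMAux
namespace ASMAux
variable {n : ℕ} {A : Mat n} {i0 i1 j0 j1 : Fin n}

lemma entry_facts (hA : IsASM A) (hi : (i1:ℕ) = (i0:ℕ)+1) (hj : (j1:ℕ) = (j0:ℕ)+1)
    (hc2 : cs A (i1:ℕ) (j1:ℕ) = cs A (i0:ℕ) (j1:ℕ) + 1)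
    (hc3 : cs A ((i1:ℕ)+1) (j1:ℕ) = cs A (i1:ℕ) (j1:ℕ))
    (hc4 : cs A (i1:ℕ) (j1:ℕ) = cs A (i1:ℕ) (j0:ℕ) + 1)
    (hc5 : cs A (i1:ℕ) ((j1:ℕ)+1) = cs A (i1:ℕ) (j1:ℕ)) :
    (A i0 j0 = 0 ∨ A i0 j0 = 1) ∧ (-1 ≤ A i0 j1 ∧ A i0 j1 ≤ 0) ∧
    (-1 ≤ A i1 j0 ∧ A i1 j0 ≤ 0) ∧ (A i1 j1 = 0 ∨ A i1 j1 = 1) ∧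
    A i0 j1 = cs A (i0:ℕ) (j1:ℕ) - cs A (i0:ℕ) ((j1:ℕ)+1) ∧
    A i1 j0 = cs A (i1:ℕ) (j0:ℕ) - cs A ((i1:ℕ)+1) (j0:ℕ) := by
  have e1 := entry_cs A i0 j0
  rw [← hi, ← hj] at e1
  have hstep1 := rowstep (A := A) hA i0 (j0:ℕ)
  rw [← hi] at hstep1
  have e2 := entry_cs A i0 j1
  rw [← hi] at e2
  have hstep2 := colstep (A := A) hA (i0:ℕ) j1
  have e3 := entry_cs A i1 j0
  rw [← hj] at e3
  have hstep3 := rowstep (A := A) hA i1 (j0:ℕ)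
  have e4 := entry_cs A i1 j1
  have hstep4 := colstep (A := A) hA ((i1:ℕ)+1) j1
  have hstep5 := rowstep (A := A) hA i1 ((j1:ℕ)+1)
  refine ⟨by omega, by omega, by omega, by omega, by omega, by omega⟩

lemma Iic_ind_sum (b : Fin n) (c : ℤ) (j : Fin n) :
    (∑ k ∈ Finset.Iic j, if k = b then c else 0) = if b ≤ j then c else 0 := by
  rw [Finset.sum_ite_eq' (Finset.Iic j) b (fun _ => c)]
  simp [Finset.mem_Iic]

lemma Epat_row (hi : (i1:ℕ) = (i0:ℕ)+1) (hj : (j1:ℕ) = (j0:ℕ)+1) (p : Fin n) (j : Fin n) :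
    (∑ k ∈ Finset.Iic j, Epat i0 i1 j0 j1 p k)
      = (if p = i0 ∧ j = j0 then -1 else 0) + (if p = i1 ∧ j = j0 then 1 else 0) := by
  unfold Epat
  simp only [Finset.sum_add_distrib]
  have pt : ∀ (a : Fin n) (b : Fin n) (c : ℤ) (k : Fin n),
      (if p = a ∧ k = b then c else 0) = (if k = b then (if p = a then c else 0) else 0) := by
    intro a b c k
    split_ifs <;> tauto
  rw [Finset.sum_congr rfl (fun k _ => pt i0 j0 (-1) k),
    Finset.sum_congr rfl (fun k _ => pt i0 j1 1 k),
    Finset.sum_congr rfl (fun k _ => pt i1 j0 1 k),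
    Finset.sum_congr rfl (fun k _ => pt i1 j1 (-1) k),
    Iic_ind_sum, Iic_ind_sum, Iic_ind_sum, Iic_ind_sum]
  have h1 : (j0 ≤ j) ↔ ((j0:ℕ) ≤ (j:ℕ)) := Iff.rfl
  have h2 : (j1 ≤ j) ↔ ((j1:ℕ) ≤ (j:ℕ)) := Iff.rfl
  have h3 : (j = j0) ↔ ((j:ℕ) = (j0:ℕ)) := Fin.ext_iff
  split_ifs <;> simp_all <;> omega

lemma Epat_col (hi : (i1:ℕ) = (i0:ℕ)+1) (hj : (j1:ℕ) = (j0:ℕ)+1) (q : Fin n) (i : Fin n) :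
    (∑ k ∈ Finset.Iic i, Epat i0 i1 j0 j1 k q)
      = (if q = j0 ∧ i = i0 then -1 else 0) + (if q = j1 ∧ i = i0 then 1 else 0) := by
  unfold Epat
  simp only [Finset.sum_add_distrib]
  have pt : ∀ (a : Fin n) (b : Fin n) (c : ℤ) (k : Fin n),
      (if k = a ∧ q = b then c else 0) = (if k = a then (if q = b then c else 0) else 0) := by
    intro a b c k
    split_ifs <;> tauto
  rw [Finset.sum_congr rfl (fun k _ => pt i0 j0 (-1) k),
    Finset.sum_congr rfl (fun k _ => pt i0 j1 1 k),
    Finset.sum_congr rfl (fun k _ => pt i1 j0 1 k),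
    Finset.sum_congr rfl (fun k _ => pt i1 j1 (-1) k),
    Iic_ind_sum, Iic_ind_sum, Iic_ind_sum, Iic_ind_sum]
  have h1 : (i0 ≤ i) ↔ ((i0:ℕ) ≤ (i:ℕ)) := Iff.rfl
  have h2 : (i1 ≤ i) ↔ ((i1:ℕ) ≤ (i:ℕ)) := Iff.rfl
  have h3 : (i = i0) ↔ ((i:ℕ) = (i0:ℕ)) := Fin.ext_iff
  split_ifs <;> simp_all <;> omega

lemma Epat_row_full (hi : (i1:ℕ) = (i0:ℕ)+1) (hj : (j1:ℕ) = (j0:ℕ)+1) (p : Fin n) :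
    (∑ k, Epat i0 i1 j0 j1 p k) = 0 := by
  have hjj : j0 ≠ j1 := fun hc => by rw [hc] at hj; omega
  unfold Epat
  simp only [Finset.sum_add_distrib, ite_and]
  by_cases hp0 : p = i0 <;> by_cases hp1 : p = i1 <;>
    simp [hp0, hp1, Finset.sum_ite_eq'] <;> split_ifs <;> ring

lemma Epat_col_full (hi : (i1:ℕ) = (i0:ℕ)+1) (hj : (j1:ℕ) = (j0:ℕ)+1) (q : Fin n) :
    (∑ k, Epat i0 i1 j0 j1 k q) = 0 := by
  unfold Epat
  simp only [Finset.sum_add_distrib]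
  have pt : ∀ (a : Fin n) (b : Fin n) (c : ℤ) (k : Fin n),
      (if k = a ∧ q = b then c else 0) = (if k = a then (if q = b then c else 0) else 0) := by
    intro a b c k
    split_ifs <;> tauto
  rw [Finset.sum_congr rfl (fun k _ => pt i0 j0 (-1) k),
    Finset.sum_congr rfl (fun k _ => pt i0 j1 1 k),
    Finset.sum_congr rfl (fun k _ => pt i1 j0 1 k),
    Finset.sum_congr rfl (fun k _ => pt i1 j1 (-1) k)]
  simp only [Finset.sum_ite_eq', Finset.mem_univ, if_true]
  by_cases hq0 : q = j0 <;> by_cases hq1 : q = j1 <;> simp [hq0, hq1] <;> omega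

end ASMAux
namespace ASMAux
variable {n : ℕ} {A : Mat n} {i0 i1 j0 j1 : Fin n}

lemma isASM_C (hA : IsASM A) (hi : (i1:ℕ) = (i0:ℕ)+1) (hj : (j1:ℕ) = (j0:ℕ)+1)
    (hc2 : cs A (i1:ℕ) (j1:ℕ) = cs A (i0:ℕ) (j1:ℕ) + 1)
    (hc3 : cs A ((i1:ℕ)+1) (j1:ℕ) = cs A (i1:ℕ) (j1:ℕ))
    (hc4 : cs A (i1:ℕ) (j1:ℕ) = cs A (i1:ℕ) (j0:ℕ) + 1)
    (hc5 : cs A (i1:ℕ) ((j1:ℕ)+1) = cs A (i1:ℕ) (j1:ℕ)) :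
    IsASM (A + Epat i0 i1 j0 j1) := by
  obtain ⟨hA1, hA2, hA3, hA4, -, -⟩ := entry_facts hA hi hj hc2 hc3 hc4 hc5
  have hii : i0 ≠ i1 := fun hc => by rw [hc] at hi; omega
  have hjj : j0 ≠ j1 := fun hc => by rw [hc] at hj; omega
  refine ⟨?_, ?_, ?_, ?_, ?_⟩
  · -- entries
    intro p q
    simp only [Matrix.add_apply]
    unfold Epat
    by_cases hp0 : p = i0
    · rw [hp0]
      by_cases hq0 : q = j0
      · rw [hq0]
        rw [if_pos (⟨rfl, rfl⟩ : i0 = i0 ∧ j0 = j0),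
          if_neg (fun hc : i0 = i0 ∧ j0 = j1 => hjj hc.2),
          if_neg (fun hc : i0 = i1 ∧ j0 = j0 => hii hc.1),
          if_neg (fun hc : i0 = i1 ∧ j0 = j1 => hii hc.1)]
        omega
      · by_cases hq1 : q = j1
        · rw [hq1]
          have hq0' : ¬ j1 = j0 := fun hc => hq0 (hq1.trans hc)
          rw [if_neg (fun hc : i0 = i0 ∧ j1 = j0 => hq0' hc.2),
            if_pos (⟨rfl, rfl⟩ : i0 = i0 ∧ j1 = j1),
            if_neg (fun hc : i0 = i1 ∧ j1 = j0 => hii hc.1),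
            if_neg (fun hc : i0 = i1 ∧ j1 = j1 => hii hc.1)]
          omega
        · have := hA.1 i0 q
          rw [if_neg (fun hc : i0 = i0 ∧ q = j0 => hq0 hc.2),
            if_neg (fun hc : i0 = i0 ∧ q = j1 => hq1 hc.2),
            if_neg (fun hc : i0 = i1 ∧ q = j0 => hii hc.1),
            if_neg (fun hc : i0 = i1 ∧ q = j1 => hii hc.1)]
          omega
    · by_cases hp1 : p = i1
      · rw [hp1]
        have hp0' : ¬ i1 = i0 := fun hc => hp0 (hp1.trans hc)
        by_cases hq0 : q = j0
        · rw [hq0]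
          rw [if_neg (fun hc : i1 = i0 ∧ j0 = j0 => hp0' hc.1),
            if_neg (fun hc : i1 = i0 ∧ j0 = j1 => hp0' hc.1),
            if_pos (⟨rfl, rfl⟩ : i1 = i1 ∧ j0 = j0),
            if_neg (fun hc : i1 = i1 ∧ j0 = j1 => hjj hc.2)]
          omega
        · by_cases hq1 : q = j1
          · rw [hq1]
            have hq0' : ¬ j1 = j0 := fun hc => hq0 (hq1.trans hc)
            rw [if_neg (fun hc : i1 = i0 ∧ j1 = j0 => hp0' hc.1),
              if_neg (fun hc : i1 = i0 ∧ j1 = j1 => hp0' hc.1),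
              if_neg (fun hc : i1 = i1 ∧ j1 = j0 => hq0' hc.2),
              if_pos (⟨rfl, rfl⟩ : i1 = i1 ∧ j1 = j1)]
            omega
          · have := hA.1 i1 q
            rw [if_neg (fun hc : i1 = i0 ∧ q = j0 => hp0' hc.1),
              if_neg (fun hc : i1 = i0 ∧ q = j1 => hp0' hc.1),
              if_neg (fun hc : i1 = i1 ∧ q = j0 => hq0 hc.2),
              if_neg (fun hc : i1 = i1 ∧ q = j1 => hq1 hc.2)]
            omega
      · have := hA.1 p q
        rw [if_neg (fun hc : p = i0 ∧ q = j0 => hp0 hc.1),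
          if_neg (fun hc : p = i0 ∧ q = j1 => hp0 hc.1),
          if_neg (fun hc : p = i1 ∧ q = j0 => hp1 hc.1),
          if_neg (fun hc : p = i1 ∧ q = j1 => hp1 hc.1)]
        omega
  · -- partial row sums
    intro p j
    have hrow : (∑ k ∈ Finset.Iic j, (A + Epat i0 i1 j0 j1) p k)
        = (∑ k ∈ Finset.Iic j, A p k) + (∑ k ∈ Finset.Iic j, Epat i0 i1 j0 j1 p k) := by
      rw [← Finset.sum_add_distrib]
      exact Finset.sum_congr rfl (fun k _ => by simp [Matrix.add_apply])
    rw [hrow, Epat_row hi hj]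
    by_cases hp0 : p = i0
    · rw [hp0]
      by_cases hjq : j = j0
      · rw [hjq]
        have hIic := Iic_row_cs A i0 j0
        rw [← hi, ← hj] at hIic
        rw [if_pos (⟨rfl, rfl⟩ : i0 = i0 ∧ j0 = j0),
          if_neg (fun hc : i0 = i1 ∧ j0 = j0 => hii hc.1)]
        omega
      · have := hA.2.1 i0 j
        rw [if_neg (fun hc : i0 = i0 ∧ j = j0 => hjq hc.2),
          if_neg (fun hc : i0 = i1 ∧ j = j0 => hii hc.1)]
        omega
    · by_cases hp1 : p = i1
      · rw [hp1]
        have hp0' : ¬ i1 = i0 := fun hc => hp0 (hp1.trans hc)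
        by_cases hjq : j = j0
        · rw [hjq]
          have hIic := Iic_row_cs A i1 j0
          rw [← hj] at hIic
          rw [if_neg (fun hc : i1 = i0 ∧ j0 = j0 => hp0' hc.1),
            if_pos (⟨rfl, rfl⟩ : i1 = i1 ∧ j0 = j0)]
          omega
        · have := hA.2.1 i1 j
          rw [if_neg (fun hc : i1 = i0 ∧ j = j0 => hp0' hc.1),
            if_neg (fun hc : i1 = i1 ∧ j = j0 => hjq hc.2)]
          omega
      · have := hA.2.1 p j
        rw [if_neg (fun hc : p = i0 ∧ j = j0 => hp0 hc.1),
          if_neg (fun hc : p = i1 ∧ j = j0 => hp1 hc.1)]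
        omega
  · -- partial column sums
    intro i q
    have hcol : (∑ k ∈ Finset.Iic i, (A + Epat i0 i1 j0 j1) k q)
        = (∑ k ∈ Finset.Iic i, A k q) + (∑ k ∈ Finset.Iic i, Epat i0 i1 j0 j1 k q) := by
      rw [← Finset.sum_add_distrib]
      exact Finset.sum_congr rfl (fun k _ => by simp [Matrix.add_apply])
    rw [hcol, Epat_col hi hj]
    by_cases hq0 : q = j0
    · rw [hq0]
      by_cases hiq : i = i0
      · rw [hiq]
        have hIic := Iic_col_cs A i0 j0
        rw [← hi, ← hj] at hIic
        rw [if_pos (⟨rfl, rfl⟩ : j0 = j0 ∧ i0 = i0),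
          if_neg (fun hc : j0 = j1 ∧ i0 = i0 => hjj hc.1)]
        omega
      · have := hA.2.2.1 i j0
        rw [if_neg (fun hc : j0 = j0 ∧ i = i0 => hiq hc.2),
          if_neg (fun hc : j0 = j1 ∧ i = i0 => hjj hc.1)]
        omega
    · by_cases hq1 : q = j1
      · rw [hq1]
        have hq0' : ¬ j1 = j0 := fun hc => hq0 (hq1.trans hc)
        by_cases hiq : i = i0
        · rw [hiq]
          have hIic := Iic_col_cs A i0 j1
          rw [← hi] at hIic
          rw [if_neg (fun hc : j1 = j0 ∧ i0 = i0 => hq0' hc.1),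
            if_pos (⟨rfl, rfl⟩ : j1 = j1 ∧ i0 = i0)]
          omega
        · have := hA.2.2.1 i j1
          rw [if_neg (fun hc : j1 = j0 ∧ i = i0 => hq0' hc.1),
            if_neg (fun hc : j1 = j1 ∧ i = i0 => hiq hc.2)]
          omega
      · have := hA.2.2.1 i q
        rw [if_neg (fun hc : q = j0 ∧ i = i0 => hq0 hc.1),
          if_neg (fun hc : q = j1 ∧ i = i0 => hq1 hc.1)]
        omega
  · -- full row sums
    intro p
    have hsum : (∑ k, (A + Epat i0 i1 j0 j1) p k)
        = (∑ k, A p k) + (∑ k, Epat i0 i1 j0 j1 p k) := by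
      rw [← Finset.sum_add_distrib]
      exact Finset.sum_congr rfl (fun k _ => by simp [Matrix.add_apply])
    rw [hsum, Epat_row_full hi hj, hA.2.2.2.1 p]
    ring
  · -- full column sums
    intro q
    have hsum : (∑ k, (A + Epat i0 i1 j0 j1) k q)
        = (∑ k, A k q) + (∑ k, Epat i0 i1 j0 j1 k q) := by
      rw [← Finset.sum_add_distrib]
      exact Finset.sum_congr rfl (fun k _ => by simp [Matrix.add_apply])
    rw [hsum, Epat_col_full hi hj, hA.2.2.2.2 q]
    ring

end ASMAux
namespace ASMAux
variable {n : ℕ} {A : Mat n} {i0 i1 j0 j1 : Fin n}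

lemma matrix_eq_of_corner {M N : Mat n}
    (h : ∀ i j : Fin n, cornerSum M i j = cornerSum N i j) : M = N := by
  have hcs : ∀ i j : ℕ, i ≤ n → j ≤ n → cs M i j = cs N i j := by
    intro i j hi hj
    rcases i with _ | i
    · simp [cs_zero_left]
    rcases j with _ | j
    · simp [cs_zero_right]
    have := h ⟨i, by omega⟩ ⟨j, by omega⟩
    rwa [corner_cs, corner_cs] at this
  funext p q
  have hp := p.isLt
  have hq := q.isLt
  rw [entry_cs M p q, entry_cs N p q,
    hcs ((p:ℕ)+1) ((q:ℕ)+1) (by omega) (by omega),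
    hcs (p:ℕ) ((q:ℕ)+1) (by omega) (by omega),
    hcs ((p:ℕ)+1) (q:ℕ) (by omega) (by omega),
    hcs (p:ℕ) (q:ℕ) (by omega) (by omega)]

lemma Epat_sum_lt_gt (a b : Fin n) :
    (∑ i : Fin n, ∑ l : Fin n, if i < a ∧ b < l then Epat i0 i1 j0 j1 i l else 0)
      = (if i0 < a ∧ b < j0 then -1 else 0) + (if i0 < a ∧ b < j1 then 1 else 0)
        + (if i1 < a ∧ b < j0 then 1 else 0) + (if i1 < a ∧ b < j1 then -1 else 0) := by
  have pt : ∀ i l : Fin n, (if i < a ∧ b < l then Epat i0 i1 j0 j1 i l else 0)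
      = (if i < a ∧ b < l then (if i = i0 ∧ l = j0 then (-1:ℤ) else 0) else 0)
        + (if i < a ∧ b < l then (if i = i0 ∧ l = j1 then (1:ℤ) else 0) else 0)
        + (if i < a ∧ b < l then (if i = i1 ∧ l = j0 then (1:ℤ) else 0) else 0)
        + (if i < a ∧ b < l then (if i = i1 ∧ l = j1 then (-1:ℤ) else 0) else 0) := by
    intro i l
    unfold Epat
    split_ifs <;> ring
  rw [Finset.sum_congr rfl (fun i _ => Finset.sum_congr rfl (fun l _ => pt i l))]
  simp only [Finset.sum_add_distrib]
  rw [ind_sum_lt_gt, ind_sum_lt_gt, ind_sum_lt_gt, ind_sum_lt_gt]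

lemma inv_diff (hA : IsASM A) (hi : (i1:ℕ) = (i0:ℕ)+1) (hj : (j1:ℕ) = (j0:ℕ)+1)
    (hc2 : cs A (i1:ℕ) (j1:ℕ) = cs A (i0:ℕ) (j1:ℕ) + 1)
    (hc3 : cs A ((i1:ℕ)+1) (j1:ℕ) = cs A (i1:ℕ) (j1:ℕ))
    (hc4 : cs A (i1:ℕ) (j1:ℕ) = cs A (i1:ℕ) (j0:ℕ) + 1)
    (hc5 : cs A (i1:ℕ) ((j1:ℕ)+1) = cs A (i1:ℕ) (j1:ℕ)) :
    asmInv (A + Epat i0 i1 j0 j1) = asmInv A + A i0 j1 + A i1 j0 + 1 := by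
  obtain ⟨hA1, hA2, hA3, hA4, hx, hy⟩ := entry_facts hA hi hj hc2 hc3 hc4 hc5
  have pt : ∀ i j k l : Fin n,
      (if i < j ∧ k < l then (A + Epat i0 i1 j0 j1) j k * (A + Epat i0 i1 j0 j1) i l else 0)
        = (if i < j ∧ k < l then A j k * A i l else 0)
          + (if i < j ∧ k < l then Epat i0 i1 j0 j1 j k * A i l else 0)
          + (if i < j ∧ k < l then A j k * Epat i0 i1 j0 j1 i l else 0)
          + (if i < j ∧ k < l then Epat i0 i1 j0 j1 j k * Epat i0 i1 j0 j1 i l else 0) := by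
    intro i j k l
    simp only [Matrix.add_apply]
    split_ifs <;> ring
  have expand : asmInv (A + Epat i0 i1 j0 j1)
      = asmInv A
        + (∑ i : Fin n, ∑ j : Fin n, ∑ k : Fin n, ∑ l : Fin n,
            if i < j ∧ k < l then Epat i0 i1 j0 j1 j k * A i l else 0)
        + (∑ i : Fin n, ∑ j : Fin n, ∑ k : Fin n, ∑ l : Fin n,
            if i < j ∧ k < l then A j k * Epat i0 i1 j0 j1 i l else 0)
        + (∑ i : Fin n, ∑ j : Fin n, ∑ k : Fin n, ∑ l : Fin n,
            if i < j ∧ k < l then Epat i0 i1 j0 j1 j k * Epat i0 i1 j0 j1 i l else 0) := by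
    unfold asmInv
    rw [Finset.sum_congr rfl (fun i _ => Finset.sum_congr rfl (fun j _ =>
      Finset.sum_congr rfl (fun k _ => Finset.sum_congr rfl (fun l _ => pt i j k l))))]
    simp only [Finset.sum_add_distrib]
  -- T1
  have ptT1 : ∀ (M : Mat n), ∀ i j k l : Fin n,
      (if i < j ∧ k < l then Epat i0 i1 j0 j1 j k * M i l else 0)
        = (if i < j ∧ k < l then (if j = i0 ∧ k = j0 then (-1:ℤ) else 0) * M i l else 0)
          + (if i < j ∧ k < l then (if j = i0 ∧ k = j1 then (1:ℤ) else 0) * M i l else 0)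
          + (if i < j ∧ k < l then (if j = i1 ∧ k = j0 then (1:ℤ) else 0) * M i l else 0)
          + (if i < j ∧ k < l then (if j = i1 ∧ k = j1 then (-1:ℤ) else 0) * M i l else 0) := by
    intro M i j k l
    unfold Epat
    split_ifs <;> ring
  have hT1 : (∑ i : Fin n, ∑ j : Fin n, ∑ k : Fin n, ∑ l : Fin n,
      if i < j ∧ k < l then Epat i0 i1 j0 j1 j k * A i l else 0) = A i0 j1 := by
    rw [Finset.sum_congr rfl (fun i _ => Finset.sum_congr rfl (fun j _ =>
      Finset.sum_congr rfl (fun k _ => Finset.sum_congr rfl (fun l _ => ptT1 A i j k l))))]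
    simp only [Finset.sum_add_distrib]
    rw [T1_eval A i0 j0 (-1), T1_eval A i0 j1 1, T1_eval A i1 j0 1, T1_eval A i1 j1 (-1),
      sum_lt_gt hA i0 j0, sum_lt_gt hA i0 j1, sum_lt_gt hA i1 j0, sum_lt_gt hA i1 j1,
      ← hj]
    rw [hx]
    have hs1 := colstep (A := A) hA (i0:ℕ) j1
    have hs2 := colstep (A := A) hA (i1:ℕ) j1
    push_cast
    linarith [hc5]
  -- T2
  have ptT2 : ∀ (M : Mat n), ∀ i j k l : Fin n,
      (if i < j ∧ k < l then M j k * Epat i0 i1 j0 j1 i l else 0)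
        = (if i < j ∧ k < l then M j k * (if i = i0 ∧ l = j0 then (-1:ℤ) else 0) else 0)
          + (if i < j ∧ k < l then M j k * (if i = i0 ∧ l = j1 then (1:ℤ) else 0) else 0)
          + (if i < j ∧ k < l then M j k * (if i = i1 ∧ l = j0 then (1:ℤ) else 0) else 0)
          + (if i < j ∧ k < l then M j k * (if i = i1 ∧ l = j1 then (-1:ℤ) else 0) else 0) := by
    intro M i j k l
    unfold Epat
    split_ifs <;> ring
  have hT2 : (∑ i : Fin n, ∑ j : Fin n, ∑ k : Fin n, ∑ l : Fin n,
      if i < j ∧ k < l then A j k * Epat i0 i1 j0 j1 i l else 0) = A i1 j0 := by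
    rw [Finset.sum_congr rfl (fun i _ => Finset.sum_congr rfl (fun j _ =>
      Finset.sum_congr rfl (fun k _ => Finset.sum_congr rfl (fun l _ => ptT2 A i j k l))))]
    simp only [Finset.sum_add_distrib]
    rw [T2_eval A i0 j0 (-1), T2_eval A i0 j1 1, T2_eval A i1 j0 1, T2_eval A i1 j1 (-1),
      sum_gt_lt hA i0 j0, sum_gt_lt hA i0 j1, sum_gt_lt hA i1 j0, sum_gt_lt hA i1 j1,
      ← hi]
    rw [hy]
    push_cast
    linarith [hc3]
  -- T3
  have hT3 : (∑ i : Fin n, ∑ j : Fin n, ∑ k : Fin n, ∑ l : Fin n,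
      if i < j ∧ k < l then Epat i0 i1 j0 j1 j k * Epat i0 i1 j0 j1 i l else 0) = 1 := by
    rw [Finset.sum_congr rfl (fun i _ => Finset.sum_congr rfl (fun j _ =>
      Finset.sum_congr rfl (fun k _ => Finset.sum_congr rfl
        (fun l _ => ptT1 (Epat i0 i1 j0 j1) i j k l))))]
    simp only [Finset.sum_add_distrib]
    rw [T1_eval (Epat i0 i1 j0 j1) i0 j0 (-1), T1_eval (Epat i0 i1 j0 j1) i0 j1 1,
      T1_eval (Epat i0 i1 j0 j1) i1 j0 1, T1_eval (Epat i0 i1 j0 j1) i1 j1 (-1),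
      Epat_sum_lt_gt, Epat_sum_lt_gt, Epat_sum_lt_gt, Epat_sum_lt_gt]
    have l1 : ¬ i0 < i0 := lt_irrefl _
    have l2 : ¬ i1 < i0 := by rw [Fin.lt_def]; omega
    have l3 : ¬ i1 < i1 := lt_irrefl _
    have l4 : i0 < i1 := by rw [Fin.lt_def]; omega
    have m1 : ¬ j0 < j0 := lt_irrefl _
    have m2 : ¬ j1 < j0 := by rw [Fin.lt_def]; omega
    have m3 : ¬ j1 < j1 := lt_irrefl _
    have m4 : j0 < j1 := by rw [Fin.lt_def]; omega
    simp only [l1, l2, l3, l4, m1, m2, m3, m4, true_and, and_true, false_and, and_false,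
      if_true, if_false]
    norm_num
  rw [expand, hT1, hT2, hT3]

lemma neg_diff (hA : IsASM A) (hi : (i1:ℕ) = (i0:ℕ)+1) (hj : (j1:ℕ) = (j0:ℕ)+1)
    (hc2 : cs A (i1:ℕ) (j1:ℕ) = cs A (i0:ℕ) (j1:ℕ) + 1)
    (hc3 : cs A ((i1:ℕ)+1) (j1:ℕ) = cs A (i1:ℕ) (j1:ℕ))
    (hc4 : cs A (i1:ℕ) (j1:ℕ) = cs A (i1:ℕ) (j0:ℕ) + 1)
    (hc5 : cs A (i1:ℕ) ((j1:ℕ)+1) = cs A (i1:ℕ) (j1:ℕ)) :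
    ((Finset.univ.filter fun p : Fin n × Fin n =>
        (A + Epat i0 i1 j0 j1) p.1 p.2 = -1).card : ℤ)
      - ((Finset.univ.filter fun p : Fin n × Fin n => A p.1 p.2 = -1).card : ℤ)
      = (if A i0 j0 = 0 then 1 else 0) + (if A i1 j1 = 0 then 1 else 0)
        - (if A i0 j1 = -1 then 1 else 0) - (if A i1 j0 = -1 then 1 else 0) := by
  obtain ⟨hA1, hA2, hA3, hA4, -, -⟩ := entry_facts hA hi hj hc2 hc3 hc4 hc5
  have hii : i0 ≠ i1 := fun hc => by rw [hc] at hi; omega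
  have hjj : j0 ≠ j1 := fun hc => by rw [hc] at hj; omega
  rw [numNegOnes_sum, numNegOnes_sum, ← Finset.sum_sub_distrib]
  have inner : ∀ p, (∑ q : Fin n, if (A + Epat i0 i1 j0 j1) p q = -1 then (1:ℤ) else 0)
      - (∑ q : Fin n, if A p q = -1 then (1:ℤ) else 0)
      = ∑ q : Fin n, ((if (A + Epat i0 i1 j0 j1) p q = -1 then (1:ℤ) else 0)
          - (if A p q = -1 then (1:ℤ) else 0)) := by
    intro p
    rw [Finset.sum_sub_distrib]
  rw [Finset.sum_congr rfl (fun p _ => inner p)]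
  have pt : ∀ p q : Fin n,
      ((if (A + Epat i0 i1 j0 j1) p q = -1 then (1:ℤ) else 0)
          - (if A p q = -1 then (1:ℤ) else 0))
        = (if p = i0 ∧ q = j0 then (if A i0 j0 = 0 then (1:ℤ) else 0) else 0)
          + (if p = i0 ∧ q = j1 then -(if A i0 j1 = -1 then (1:ℤ) else 0) else 0)
          + (if p = i1 ∧ q = j0 then -(if A i1 j0 = -1 then (1:ℤ) else 0) else 0)
          + (if p = i1 ∧ q = j1 then (if A i1 j1 = 0 then (1:ℤ) else 0) else 0) := by
    intro p q
    simp only [Matrix.add_apply]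
    unfold Epat
    by_cases hp0 : p = i0
    · rw [hp0]
      by_cases hq0 : q = j0
      · rw [hq0]
        simp only [if_pos (⟨rfl, rfl⟩ : i0 = i0 ∧ j0 = j0),
          if_neg (fun hc : i0 = i0 ∧ j0 = j1 => hjj hc.2),
          if_neg (fun hc : i0 = i1 ∧ j0 = j0 => hii hc.1),
          if_neg (fun hc : i0 = i1 ∧ j0 = j1 => hii hc.1)]
        rcases hA1 with e | e <;> rw [e] <;> simp [hii, hjj]
      · by_cases hq1 : q = j1
        · rw [hq1]
          have hq0' : ¬ j1 = j0 := fun hc => hq0 (hq1.trans hc)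
          simp only [if_neg (fun hc : i0 = i0 ∧ j1 = j0 => hq0' hc.2),
            if_pos (⟨rfl, rfl⟩ : i0 = i0 ∧ j1 = j1),
            if_neg (fun hc : i0 = i1 ∧ j1 = j0 => hii hc.1),
            if_neg (fun hc : i0 = i1 ∧ j1 = j1 => hii hc.1)]
          have h2 : A i0 j1 = -1 ∨ A i0 j1 = 0 := by omega
          rcases h2 with e | e <;> rw [e] <;> simp [hii, hq0']
        · simp only [if_neg (fun hc : i0 = i0 ∧ q = j0 => hq0 hc.2),
            if_neg (fun hc : i0 = i0 ∧ q = j1 => hq1 hc.2),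
            if_neg (fun hc : i0 = i1 ∧ q = j0 => hii hc.1),
            if_neg (fun hc : i0 = i1 ∧ q = j1 => hii hc.1)]
          simp [hq0, hq1]
    · by_cases hp1 : p = i1
      · rw [hp1]
        have hp0' : ¬ i1 = i0 := fun hc => hp0 (hp1.trans hc)
        by_cases hq0 : q = j0
        · rw [hq0]
          simp only [if_neg (fun hc : i1 = i0 ∧ j0 = j0 => hp0' hc.1),
            if_neg (fun hc : i1 = i0 ∧ j0 = j1 => hp0' hc.1),
            if_pos (⟨rfl, rfl⟩ : i1 = i1 ∧ j0 = j0),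
            if_neg (fun hc : i1 = i1 ∧ j0 = j1 => hjj hc.2)]
          have h3 : A i1 j0 = -1 ∨ A i1 j0 = 0 := by omega
          rcases h3 with e | e <;> rw [e] <;> simp [hp0', hjj]
        · by_cases hq1 : q = j1
          · rw [hq1]
            have hq0' : ¬ j1 = j0 := fun hc => hq0 (hq1.trans hc)
            simp only [if_neg (fun hc : i1 = i0 ∧ j1 = j0 => hp0' hc.1),
              if_neg (fun hc : i1 = i0 ∧ j1 = j1 => hp0' hc.1),
              if_neg (fun hc : i1 = i1 ∧ j1 = j0 => hq0' hc.2),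
              if_pos (⟨rfl, rfl⟩ : i1 = i1 ∧ j1 = j1)]
            rcases hA4 with e | e <;> rw [e] <;> simp [hp0', hq0']
          · simp only [if_neg (fun hc : i1 = i0 ∧ q = j0 => hp0' hc.1),
              if_neg (fun hc : i1 = i0 ∧ q = j1 => hp0' hc.1),
              if_neg (fun hc : i1 = i1 ∧ q = j0 => hq0 hc.2),
              if_neg (fun hc : i1 = i1 ∧ q = j1 => hq1 hc.2)]
            simp [hq0, hq1]
      · simp only [if_neg (fun hc : p = i0 ∧ q = j0 => hp0 hc.1),
          if_neg (fun hc : p = i0 ∧ q = j1 => hp0 hc.1),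
          if_neg (fun hc : p = i1 ∧ q = j0 => hp1 hc.1),
          if_neg (fun hc : p = i1 ∧ q = j1 => hp1 hc.1)]
        ring
  rw [Finset.sum_congr rfl (fun p _ => Finset.sum_congr rfl (fun q _ => pt p q))]
  simp only [Finset.sum_add_distrib]
  rw [sum_ind2, sum_ind2, sum_ind2, sum_ind2]
  ring

end ASMAux

theorem weak_inversion_diff_of_covers {n : ℕ} (A B : Matrix (Fin n) (Fin n) ℤ)
    (hA : IsASM A) (hB : IsASM B) (h : asmCovers A B) :
    2 * (asmInv B - asmInv A) - ((numNegOnes B : ℤ) - (numNegOnes A : ℤ)) ∈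
      ({-2, -1, 0, 1, 2} : Set ℤ) := by
  classical
  obtain ⟨i0, i1, j0, j1, hi, hj, hc1, hc2, hc3, hc4, hc5⟩ :=
    ASMAux.exists_good_cell hA hB h.1
  have hC : IsASM (A + ASMAux.Epat i0 i1 j0 j1) := ASMAux.isASM_C hA hi hj hc2 hc3 hc4 hc5
  have cornerC : ∀ i j : Fin n, cornerSum (A + ASMAux.Epat i0 i1 j0 j1) i j
      = cornerSum A i j + (if (i:ℕ)+1 = (i1:ℕ) ∧ (j:ℕ)+1 = (j1:ℕ) then -1 else 0) := by
    intro i j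
    rw [ASMAux.corner_cs, ASMAux.corner_cs A, ASMAux.cs_add, ASMAux.cs_Epat hi hj]
  have hALEC : asmLE A (A + ASMAux.Epat i0 i1 j0 j1) := by
    intro i j
    rw [cornerC]
    split_ifs <;> omega
  have hnotCA : ¬ asmLE (A + ASMAux.Epat i0 i1 j0 j1) A := by
    intro hcon
    have := hcon i0 j0
    rw [cornerC i0 j0, if_pos ⟨by omega, by omega⟩] at this
    omega
  have hCLEB : asmLE (A + ASMAux.Epat i0 i1 j0 j1) B := by
    intro i j
    rw [cornerC]
    by_cases hcell : (i:ℕ)+1 = (i1:ℕ) ∧ (j:ℕ)+1 = (j1:ℕ)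
    · rw [if_pos hcell]
      have e1 : cornerSum A i j = ASMAux.cs A (i1:ℕ) (j1:ℕ) := by
        rw [ASMAux.corner_cs, hcell.1, hcell.2]
      have e2 : cornerSum B i j = ASMAux.cs B (i1:ℕ) (j1:ℕ) := by
        rw [ASMAux.corner_cs, hcell.1, hcell.2]
      omega
    · rw [if_neg hcell]
      have := h.1.1 i j
      omega
  have hnot := h.2 (A + ASMAux.Epat i0 i1 j0 j1) hC ⟨hALEC, hnotCA⟩
  have hBLEC : asmLE B (A + ASMAux.Epat i0 i1 j0 j1) := by
    by_contra hcon
    exact hnot ⟨hCLEB, hcon⟩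
  have hBC : B = A + ASMAux.Epat i0 i1 j0 j1 :=
    ASMAux.matrix_eq_of_corner (fun i j => le_antisymm (hCLEB i j) (hBLEC i j))
  obtain ⟨hA1, hA2, hA3, hA4, -, -⟩ := ASMAux.entry_facts hA hi hj hc2 hc3 hc4 hc5
  have hInv : asmInv (A + ASMAux.Epat i0 i1 j0 j1) = asmInv A + A i0 j1 + A i1 j0 + 1 :=
    ASMAux.inv_diff hA hi hj hc2 hc3 hc4 hc5
  have hNeg : (numNegOnes (A + ASMAux.Epat i0 i1 j0 j1) : ℤ) - (numNegOnes A : ℤ)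
      = (if A i0 j0 = 0 then 1 else 0) + (if A i1 j1 = 0 then 1 else 0)
        - (if A i0 j1 = -1 then 1 else 0) - (if A i1 j0 = -1 then 1 else 0) := by
    unfold numNegOnes
    exact ASMAux.neg_diff hA hi hj hc2 hc3 hc4 hc5
  rw [hBC, hInv]
  have hsub : (numNegOnes (A + ASMAux.Epat i0 i1 j0 j1) : ℤ) - (numNegOnes A : ℤ)
      = _ := hNeg
  rw [show (2 * (asmInv A + A i0 j1 + A i1 j0 + 1 - asmInv A)
      - ((numNegOnes (A + ASMAux.Epat i0 i1 j0 j1) : ℤ) - (numNegOnes A : ℤ)))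
      = 2 * (A i0 j1 + A i1 j0 + 1)
        - ((if A i0 j0 = 0 then 1 else 0) + (if A i1 j1 = 0 then 1 else 0)
          - (if A i0 j1 = -1 then 1 else 0) - (if A i1 j0 = -1 then 1 else 0)) by
    rw [hNeg]; ring]
  simp only [Set.mem_insert_iff, Set.mem_singleton_iff]
  have h2 : A i0 j1 = -1 ∨ A i0 j1 = 0 := by omega
  have h3 : A i1 j0 = -1 ∨ A i1 j0 = 0 := by omega
  rcases hA1 with e1 | e1 <;> rcases hA4 with e4 | e4 <;>
    rcases h2 with e2 | e2 <;> rcases h3 with e3 | e3 <;>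
    rw [e1, e2, e3, e4] <;> norm_num
end

section
/- A permutation matrix is join-irreducible in the poset (𝒜_n, ≤) of alternating sign matrices if and only if the corresponding permutation v is bigrassmannian, i.e., there is a unique pair (i, j) such that v⁻¹(i) > v⁻¹(i+1) and v(j) > v(j+1). -/
/-- Permutation matrix of `v`. -/
def permMatrix {n : ℕ} (v : Equiv.Perm (Fin n)) : Matrix (Fin n) (Fin n) ℤ :=
  fun i j => if j = v i then 1 else 0

/-!
Write `r_A(P, Q)` for the sum of the entries of `A` in rows `< P` and columns `< Q`. The ASMs
covered by a permutation matrix `A_v` are exactly the matrices whose corner sums agree with those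
of `A_v` except for an increase by one at a single *addable* cell `(i, j)`, i.e. one with
`v (i + 1) ≤ j < v i` and `v⁻¹ (j + 1) ≤ i < v⁻¹ j`. To see that every ASM `C < A_v` lies below
such a cover, start at a cell where `r_C - r_{A_v}` is maximal and walk, first along a column and
then along a row, through maximal cells until reaching an addable one; the partial sums of `C`
being `0` or `1` is what keeps the walk among maximal cells.

Distinct addable cells give distinct covers. An addable cell `(i, j)` sits at a descent `i` of `v`
and a descent `j` of `v⁻¹`, and every descent of `v` (of `v⁻¹`) has an addable cell in its row
(column). So `A_v` covers exactly one ASM iff `v` and `v⁻¹` each have exactly one descent.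
-/

open Finset Matrix

-- Orient the edge `{x, x + 1}` to the right when `D x`: a finite set of positive integers that
-- is closed under following edges contains a sink.
lemma exists_sink {S : Finset ℕ} (D : ℕ → Prop) (hS : S.Nonempty) (h0 : 0 ∉ S)
    (hleft : ∀ x, x + 1 ∈ S → ¬ D x → x ∈ S) (hright : ∀ x ∈ S, D x → x + 1 ∈ S) :
    ∃ x, x + 1 ∈ S ∧ D x ∧ ¬ D (x + 1) := by
  classical
  have hT : (S.filter fun x => ¬ D x).Nonempty := by
    refine ⟨S.max' hS, mem_filter.2 ⟨S.max'_mem hS, fun hD => ?_⟩⟩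
    have := S.le_max' _ (hright _ (S.max'_mem hS) hD)
    omega
  obtain ⟨hyS, hyD⟩ := mem_filter.1 ((S.filter fun x => ¬ D x).min'_mem hT)
  obtain ⟨x, hx⟩ := Nat.exists_eq_add_one_of_ne_zero fun h => h0 (h ▸ hyS)
  rw [hx] at hyS hyD
  refine ⟨x, hyS, by_contra fun hDx => ?_, hyD⟩
  have := (S.filter fun x => ¬ D x).min'_le x (mem_filter.2 ⟨hleft x hyS hDx, hDx⟩)
  omega

variable {n : ℕ}

section PrefixSum

variable {M : Type*} [AddCommMonoid M]

lemma sum_val_lt_zero (f : Fin n → M) : ∑ q : Fin n with q.val < 0, f q = 0 := by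
  simp

lemma sum_val_lt_succ (f : Fin n → M) {t : ℕ} (ht : t < n) :
    ∑ q : Fin n with q.val < t + 1, f q = ∑ q : Fin n with q.val < t, f q + f ⟨t, ht⟩ := by
  have : univ.filter (fun q : Fin n => q.val < t + 1)
      = insert ⟨t, ht⟩ (univ.filter fun q : Fin n => q.val < t) := by
    ext q
    simp only [mem_filter, mem_univ, true_and, mem_insert, Fin.ext_iff]
    omega
  rw [this, sum_insert (by simp), add_comm]

lemma sum_val_lt_of_le (f : Fin n → M) {Q : ℕ} (hQ : n ≤ Q) :
    ∑ q : Fin n with q.val < Q, f q = ∑ q, f q := by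
  rw [filter_true_of_mem fun q _ => q.isLt.trans_le hQ]

lemma sum_val_lt_ite_eq (t : Fin n) (a : M) (Q : ℕ) :
    ∑ q : Fin n with q.val < Q, (if q = t then a else 0) = if t.val < Q then a else 0 := by
  rw [sum_ite_eq']
  simp

lemma Iic_eq_filter_val_lt (j : Fin n) :
    Iic j = univ.filter fun q : Fin n => q.val < j.val + 1 := by
  ext q
  simp only [mem_Iic, mem_filter, mem_univ, true_and, Fin.le_def, Nat.lt_succ_iff]

end PrefixSum

-- Cut-offs are natural numbers so that the empty and the full prefix (cut-offs `0` and `n`) are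
-- available; `cornerSum A a b = extCornerSum A (a + 1) (b + 1)`.
def rowPartialSum (A : Matrix (Fin n) (Fin n) ℤ) (i : Fin n) (Q : ℕ) : ℤ :=
  ∑ q : Fin n with q.val < Q, A i q

def extCornerSum (A : Matrix (Fin n) (Fin n) ℤ) (P Q : ℕ) : ℤ :=
  ∑ p : Fin n with p.val < P, rowPartialSum A p Q

section CornerSums

variable (A B : Matrix (Fin n) (Fin n) ℤ)

lemma rowPartialSum_zero (i : Fin n) : rowPartialSum A i 0 = 0 :=
  sum_val_lt_zero _

lemma rowPartialSum_succ (i : Fin n) {Q : ℕ} (hQ : Q < n) :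
    rowPartialSum A i (Q + 1) = rowPartialSum A i Q + A i ⟨Q, hQ⟩ :=
  sum_val_lt_succ _ hQ

lemma rowPartialSum_of_le (i : Fin n) {Q : ℕ} (hQ : n ≤ Q) :
    rowPartialSum A i Q = ∑ q, A i q :=
  sum_val_lt_of_le _ hQ

lemma sum_Iic_eq_rowPartialSum (i j : Fin n) :
    ∑ k ∈ Iic j, A i k = rowPartialSum A i (j + 1) := by
  rw [Iic_eq_filter_val_lt, rowPartialSum]

lemma extCornerSum_zero_left (Q : ℕ) : extCornerSum A 0 Q = 0 :=
  sum_val_lt_zero _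

lemma extCornerSum_zero_right (P : ℕ) : extCornerSum A P 0 = 0 := by
  simp [extCornerSum, rowPartialSum_zero]

lemma extCornerSum_succ_left {P : ℕ} (hP : P < n) (Q : ℕ) :
    extCornerSum A (P + 1) Q = extCornerSum A P Q + rowPartialSum A ⟨P, hP⟩ Q :=
  sum_val_lt_succ _ hP

lemma extCornerSum_transpose (P Q : ℕ) : extCornerSum Aᵀ P Q = extCornerSum A Q P :=
  sum_comm

lemma extCornerSum_add (P Q : ℕ) :
    extCornerSum (A + B) P Q = extCornerSum A P Q + extCornerSum B P Q := by
  simp only [extCornerSum, rowPartialSum, Matrix.add_apply, sum_add_distrib]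

lemma extCornerSum_vecMulVec (u w : Fin n → ℤ) (P Q : ℕ) :
    extCornerSum (vecMulVec u w) P Q
      = (∑ p : Fin n with p.val < P, u p) * ∑ q : Fin n with q.val < Q, w q := by
  simp only [extCornerSum, rowPartialSum, vecMulVec_apply, sum_mul_sum]

lemma cornerSum_eq_extCornerSum (a b : Fin n) :
    cornerSum A a b = extCornerSum A (a + 1) (b + 1) := by
  simp only [cornerSum, extCornerSum, rowPartialSum, Iic_eq_filter_val_lt]

lemma entry_eq_extCornerSum (p q : Fin n) :
    A p q = extCornerSum A (p + 1) (q + 1) - extCornerSum A p (q + 1)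
      - extCornerSum A (p + 1) q + extCornerSum A p q := by
  rw [extCornerSum_succ_left A p.isLt, extCornerSum_succ_left A p.isLt,
    rowPartialSum_succ _ _ q.isLt]
  ring

variable {A B}

lemma extCornerSum_eq_of_cornerSum_eq (h : cornerSum A = cornerSum B) {P Q : ℕ}
    (hP : P ≤ n) (hQ : Q ≤ n) : extCornerSum A P Q = extCornerSum B P Q := by
  rcases P with _ | P
  · simp only [extCornerSum_zero_left]
  rcases Q with _ | Q
  · simp only [extCornerSum_zero_right]
  simpa only [cornerSum_eq_extCornerSum] using congr_fun₂ h ⟨P, hP⟩ ⟨Q, hQ⟩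

lemma cornerSum_injective :
    Function.Injective (cornerSum : Matrix (Fin n) (Fin n) ℤ → Fin n → Fin n → ℤ) := by
  intro A B h
  ext p q
  rw [entry_eq_extCornerSum A, entry_eq_extCornerSum B]
  have hp : (p : ℕ) + 1 ≤ n := p.isLt
  have hq : (q : ℕ) + 1 ≤ n := q.isLt
  simp only [extCornerSum_eq_of_cornerSum_eq h, hp, hq, p.isLt.le, q.isLt.le]

lemma eq_of_asmLE_of_asmLE (hAB : asmLE A B) (hBA : asmLE B A) : A = B :=
  cornerSum_injective (funext₂ fun a b => le_antisymm (hBA a b) (hAB a b))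

end CornerSums

def RowsAlternate (A : Matrix (Fin n) (Fin n) ℤ) : Prop :=
  (∀ i Q, rowPartialSum A i Q = 0 ∨ rowPartialSum A i Q = 1) ∧ ∀ i, rowPartialSum A i n = 1

section ASM

variable {A : Matrix (Fin n) (Fin n) ℤ}

lemma IsASM.transpose (hA : IsASM A) : IsASM Aᵀ :=
  ⟨fun i j => hA.1 j i, fun i j => hA.2.2.1 j i, fun i j => hA.2.1 j i, hA.2.2.2.2, hA.2.2.2.1⟩

lemma IsASM.rowsAlternate (hA : IsASM A) : RowsAlternate A := by
  refine ⟨fun i Q => ?_, fun i => ?_⟩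
  · rcases Q with _ | Q
    · exact .inl (rowPartialSum_zero A i)
    by_cases hQ : Q < n
    · simpa only [sum_Iic_eq_rowPartialSum] using hA.2.1 i ⟨Q, hQ⟩
    · exact .inr (by rw [rowPartialSum_of_le A i (by omega)]; exact hA.2.2.2.1 i)
  · rw [rowPartialSum_of_le A i le_rfl]
    exact hA.2.2.2.1 i

lemma isASM_of_rowsAlternate (hA : RowsAlternate A) (hAt : RowsAlternate Aᵀ) : IsASM A := by
  refine ⟨fun i j => ?_, fun i j => ?_, fun i j => ?_, fun i => ?_, fun j => ?_⟩
  · have := rowPartialSum_succ A i j.isLt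
    simp only [Fin.eta] at this
    rcases hA.1 i j with h | h <;> rcases hA.1 i (j + 1) with h' | h' <;> omega
  · rw [sum_Iic_eq_rowPartialSum]
    exact hA.1 i _
  · exact sum_Iic_eq_rowPartialSum Aᵀ j i ▸ hAt.1 j _
  · exact rowPartialSum_of_le A i le_rfl ▸ hA.2 i
  · exact rowPartialSum_of_le Aᵀ j le_rfl ▸ hAt.2 j

lemma IsASM.extCornerSum_left_eq (hA : IsASM A) {Q : ℕ} (hQ : Q ≤ n) :
    extCornerSum A n Q = Q := by
  rw [← extCornerSum_transpose, extCornerSum]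
  simp [hA.transpose.rowsAlternate.2, Fin.card_filter_val_lt, hQ]

end ASM

section Perm

variable (v : Equiv.Perm (Fin n))

lemma permMatrix_transpose : (permMatrix v)ᵀ = permMatrix v.symm := by
  ext i j
  simp only [transpose_apply, permMatrix, Equiv.eq_symm_apply, eq_comm]

lemma rowPartialSum_permMatrix (i : Fin n) (Q : ℕ) :
    rowPartialSum (permMatrix v) i Q = if (v i : ℕ) < Q then 1 else 0 :=
  sum_val_lt_ite_eq _ _ _

lemma rowsAlternate_permMatrix : RowsAlternate (permMatrix v) := by
  refine ⟨fun i Q => ?_, fun i => ?_⟩ <;> rw [rowPartialSum_permMatrix]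
  · split_ifs <;> simp
  · exact if_pos (v i).isLt

lemma isASM_permMatrix : IsASM (permMatrix v) :=
  isASM_of_rowsAlternate (rowsAlternate_permMatrix v)
    (permMatrix_transpose v ▸ rowsAlternate_permMatrix v.symm)

lemma symm_apply_mk_of_val_eq {x : ℕ} (hx : x < n) {p : Fin n} (h : x = v p) :
    v.symm ⟨x, hx⟩ = p := by
  rw [v.symm_apply_eq]
  exact Fin.ext h

end Perm

def Addable (v : Equiv.Perm (Fin n)) (i j : Fin n) : Prop :=
  ∃ (hi : (i : ℕ) + 1 < n) (hj : (j : ℕ) + 1 < n),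
    (v ⟨i + 1, hi⟩ : ℕ) ≤ j ∧ (j : ℕ) < v i ∧ (v.symm ⟨j + 1, hj⟩ : ℕ) ≤ i ∧ (i : ℕ) < v.symm j

lemma Addable.symm {v : Equiv.Perm (Fin n)} {i j : Fin n} (h : Addable v i j) :
    Addable v.symm j i := by
  obtain ⟨hi, hj, h₁, h₂, h₃, h₄⟩ := h
  exact ⟨hj, hi, h₃, h₄, by simpa using h₁, by simpa using h₂⟩

def basisDiff (i : ℕ) : Fin n → ℤ :=
  fun p => (if p.val = i then 1 else 0) - if p.val = i + 1 then 1 else 0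

lemma sum_basisDiff {i : ℕ} (hi : i + 1 < n) (P : ℕ) :
    ∑ p : Fin n with p.val < P, basisDiff i p = if P = i + 1 then 1 else 0 := by
  have hval : ∀ (t : ℕ) (ht : t < n) (p : Fin n), (p.val = t) = (p = ⟨t, ht⟩) :=
    fun t ht p => by simp only [Fin.ext_iff]
  simp only [basisDiff, sum_sub_distrib, hval i (by omega), hval (i + 1) hi, sum_val_lt_ite_eq]
  split_ifs <;> omega

-- Adds `(e_i - e_{i+1}) (e_j - e_{j+1})ᵀ`, which raises the corner sum at `(i, j)` by one and
-- leaves all others unchanged.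
def bump (v : Equiv.Perm (Fin n)) (i j : Fin n) : Matrix (Fin n) (Fin n) ℤ :=
  permMatrix v + vecMulVec (basisDiff i) (basisDiff j)

section Bump

variable {v : Equiv.Perm (Fin n)} {i j : Fin n}

lemma bump_transpose : (bump v i j)ᵀ = bump v.symm j i := by
  rw [bump, bump, transpose_add, permMatrix_transpose, transpose_vecMulVec]

lemma extCornerSum_bump (hi : (i : ℕ) + 1 < n) (hj : (j : ℕ) + 1 < n) (P Q : ℕ) :
    extCornerSum (bump v i j) P Q
      = extCornerSum (permMatrix v) P Q + if P = i + 1 ∧ Q = j + 1 then 1 else 0 := by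
  rw [bump, extCornerSum_add, extCornerSum_vecMulVec, sum_basisDiff hi, sum_basisDiff hj]
  split_ifs <;> simp_all

lemma cornerSum_bump (hi : (i : ℕ) + 1 < n) (hj : (j : ℕ) + 1 < n) (a b : Fin n) :
    cornerSum (bump v i j) a b = cornerSum (permMatrix v) a b + if a = i ∧ b = j then 1 else 0 := by
  simp only [cornerSum_eq_extCornerSum, extCornerSum_bump hi hj, add_left_inj,
    Fin.val_inj]

lemma rowPartialSum_bump (hj : (j : ℕ) + 1 < n) (p : Fin n) (Q : ℕ) :
    rowPartialSum (bump v i j) p Q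
      = (if (v p : ℕ) < Q then 1 else 0) + basisDiff i p * if Q = j + 1 then 1 else 0 := by
  rw [← rowPartialSum_permMatrix, ← sum_basisDiff hj, mul_sum]
  simp only [rowPartialSum, bump, Matrix.add_apply, vecMulVec_apply, sum_add_distrib]

lemma rowsAlternate_bump (h : Addable v i j) : RowsAlternate (bump v i j) := by
  obtain ⟨hi, hj, h₁, h₂, -, -⟩ := h
  refine ⟨fun p Q => ?_, fun p => ?_⟩ <;> rw [rowPartialSum_bump hj, basisDiff]
  · obtain rfl | hpi := eq_or_ne p i
    · split_ifs <;> omega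
    obtain rfl | hpi' := eq_or_ne p ⟨i + 1, hi⟩
    · split_ifs <;> omega
    have hp : p.val ≠ i := fun h => hpi (Fin.ext h)
    have hp' : p.val ≠ i + 1 := fun h => hpi' (Fin.ext h)
    simp only [hp, hp', if_false, sub_zero, zero_mul, add_zero]
    split_ifs <;> simp
  · simp only [(v p).isLt, if_true, (Nat.ne_of_lt hj).symm, if_false, mul_zero, add_zero]

lemma isASM_bump (h : Addable v i j) : IsASM (bump v i j) :=
  isASM_of_rowsAlternate (rowsAlternate_bump h) (bump_transpose ▸ rowsAlternate_bump h.symm)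

lemma asmCovers_bump (h : Addable v i j) : asmCovers (bump v i j) (permMatrix v) := by
  obtain ⟨hi, hj, -⟩ := h
  have hc := cornerSum_bump (v := v) hi hj
  have hij := hc i j
  rw [if_pos ⟨rfl, rfl⟩] at hij
  refine ⟨⟨fun a b => ?_, fun hle => ?_⟩, fun D _ hbD hDv => ?_⟩
  · rw [hc]
    split_ifs <;> omega
  · have := hle i j
    omega
  by_cases hDij : cornerSum D i j = cornerSum (permMatrix v) i j
  · refine hDv.2 fun a b => ?_
    have := hbD.1 a b
    rw [hc] at this
    split_ifs at this with hab
    · obtain ⟨rfl, rfl⟩ := hab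
      omega
    · omega
  · refine hbD.2 fun a b => ?_
    have := hDv.1 a b
    rw [hc]
    split_ifs with hab
    · obtain ⟨rfl, rfl⟩ := hab
      have := hbD.1 a b
      omega
    · omega

lemma eq_of_bump_eq {i' j' : Fin n} (h : Addable v i j) (h' : Addable v i' j')
    (heq : bump v i j = bump v i' j') : i = i' ∧ j = j' := by
  obtain ⟨hi, hj, -⟩ := h
  obtain ⟨hi', hj', -⟩ := h'
  have := congrArg (fun M => cornerSum M i j) heq
  simp only [cornerSum_bump hi hj, cornerSum_bump hi' hj', true_and, if_true] at this
  by_contra hne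
  rw [if_neg hne] at this
  omega

end Bump

def cornerExcess (C : Matrix (Fin n) (Fin n) ℤ) (v : Equiv.Perm (Fin n)) (P Q : ℕ) : ℤ :=
  extCornerSum C P Q - extCornerSum (permMatrix v) P Q

section Excess

variable {C : Matrix (Fin n) (Fin n) ℤ} {v : Equiv.Perm (Fin n)}

lemma cornerExcess_zero_left (Q : ℕ) : cornerExcess C v 0 Q = 0 := by
  simp only [cornerExcess, extCornerSum_zero_left, sub_self]

lemma IsASM.cornerExcess_left_eq_zero (hC : IsASM C) {Q : ℕ} (hQ : Q ≤ n) :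
    cornerExcess C v n Q = 0 := by
  rw [cornerExcess, hC.extCornerSum_left_eq hQ, (isASM_permMatrix v).extCornerSum_left_eq hQ,
    sub_self]

lemma cornerExcess_succ_left {P : ℕ} (hP : P < n) (Q : ℕ) :
    cornerExcess C v (P + 1) Q
      = cornerExcess C v P Q + rowPartialSum C ⟨P, hP⟩ Q
        - if (v ⟨P, hP⟩ : ℕ) < Q then 1 else 0 := by
  simp only [cornerExcess, extCornerSum_succ_left _ hP, rowPartialSum_permMatrix]
  ring

lemma cornerExcess_transpose (P Q : ℕ) : cornerExcess Cᵀ v.symm Q P = cornerExcess C v P Q := by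
  simp only [cornerExcess, ← permMatrix_transpose, extCornerSum_transpose]

lemma cornerExcess_succ_right (P : ℕ) {Q : ℕ} (hQ : Q < n) :
    cornerExcess C v P (Q + 1)
      = cornerExcess C v P Q + rowPartialSum Cᵀ ⟨Q, hQ⟩ P
        - if (v.symm ⟨Q, hQ⟩ : ℕ) < P then 1 else 0 := by
  rw [← cornerExcess_transpose, ← cornerExcess_transpose (C := C), cornerExcess_succ_left]

end Excess

section Walk

variable {C : Matrix (Fin n) (Fin n) ℤ} {v : Equiv.Perm (Fin n)} {m : ℤ}

lemma exists_row_sink (hC : IsASM C) (hm : 1 ≤ m) {Q : ℕ} (hQ : Q ≤ n)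
    (hmax : ∀ P ≤ n, cornerExcess C v P Q ≤ m) {P : ℕ} (hP : P ≤ n)
    (hPQ : cornerExcess C v P Q = m) :
    ∃ (i : Fin n) (hi : (i : ℕ) + 1 < n),
      (v ⟨i + 1, hi⟩ : ℕ) < Q ∧ Q ≤ v i ∧ cornerExcess C v (i + 1) Q = m := by
  classical
  set S := (range (n + 1)).filter fun P => cornerExcess C v P Q = m
  have hmem : ∀ x, x ∈ S ↔ x ≤ n ∧ cornerExcess C v x Q = m := by
    simp only [S, mem_filter, mem_range, Nat.lt_succ_iff, implies_true]
  have hn : cornerExcess C v n Q = 0 := hC.cornerExcess_left_eq_zero hQ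
  have hstep := fun x (hx : x < n) => cornerExcess_succ_left (C := C) (v := v) hx Q
  have hbin := fun x (hx : x < n) => hC.rowsAlternate.1 ⟨x, hx⟩ Q
  have hleft : ∀ x, x + 1 ∈ S → ¬ (∃ h : x < n, Q ≤ v ⟨x, h⟩) → x ∈ S := by
    intro x hxS hD
    rw [hmem] at hxS ⊢
    have hxn : x < n := by omega
    have := hmax x (by omega)
    have hx := hstep x hxn
    rw [if_pos (not_le.1 (not_exists.1 hD hxn))] at hx
    rcases hbin x hxn with h | h <;> omega
  have hright : ∀ x ∈ S, (∃ h : x < n, Q ≤ v ⟨x, h⟩) → x + 1 ∈ S := by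
    rintro x hxS ⟨hxn, hQx⟩
    rw [hmem] at hxS ⊢
    have := hmax (x + 1) (by omega)
    have hx := hstep x hxn
    rw [if_neg (by omega)] at hx
    rcases hbin x hxn with h | h <;> omega
  obtain ⟨x, hxS, ⟨hx, hQx⟩, hx1⟩ := exists_sink _ ⟨P, (hmem P).2 ⟨hP, hPQ⟩⟩
    (by rw [hmem, cornerExcess_zero_left]; omega) hleft hright
  rw [hmem] at hxS
  have hxn : x + 1 < n := lt_of_le_of_ne hxS.1 fun h => by rw [h] at hxS; omega
  exact ⟨⟨x, hx⟩, hxn, not_le.1 (not_exists.1 hx1 hxn), hQx, hxS.2⟩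

lemma exists_addable_of_closed (v : Equiv.Perm (Fin n)) {i : Fin n} (hi : (i : ℕ) + 1 < n)
    (T : ℕ → Prop) (hleft : ∀ x (hx : x < n), T (x + 1) → (v.symm ⟨x, hx⟩ : ℕ) ≤ i → T x)
    (hright : ∀ x (hx : x < n), T x → (i : ℕ) < v.symm ⟨x, hx⟩ → T (x + 1))
    {Q : ℕ} (hQ₁ : (v ⟨i + 1, hi⟩ : ℕ) < Q) (hQ₂ : Q ≤ v i) (hTQ : T Q) :
    ∃ j : Fin n, Addable v i j ∧ T (j + 1) := by
  classical
  set S := (Ioc (v ⟨i + 1, hi⟩ : ℕ) (v i)).filter T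
  have hmem : ∀ x, x ∈ S ↔ (v ⟨i + 1, hi⟩ : ℕ) < x ∧ x ≤ v i ∧ T x := by
    simp only [S, mem_filter, mem_Ioc, and_assoc, implies_true]
  have hvi := (v i).isLt
  have hSleft : ∀ x, x + 1 ∈ S → ¬ (∃ h : x < n, (i : ℕ) < v.symm ⟨x, h⟩) → x ∈ S := by
    intro x hxS hx
    rw [hmem] at hxS ⊢
    have hxn : x < n := by omega
    have hvx := not_lt.1 (not_exists.1 hx hxn)
    refine ⟨lt_of_le_of_ne (by omega) fun hxv => ?_, by omega, hleft x hxn hxS.2.2 hvx⟩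
    rw [symm_apply_mk_of_val_eq v hxn hxv.symm] at hvx
    simp at hvx
  have hSright : ∀ x ∈ S, (∃ h : x < n, (i : ℕ) < v.symm ⟨x, h⟩) → x + 1 ∈ S := by
    rintro x hxS ⟨hxn, hix⟩
    rw [hmem] at hxS ⊢
    refine ⟨by omega, lt_of_le_of_ne hxS.2.1 fun hxv => ?_, hright x hxn hxS.2.2 hix⟩
    rw [symm_apply_mk_of_val_eq v hxn hxv] at hix
    omega
  obtain ⟨x, hxS, ⟨hx, hix⟩, hx1⟩ := exists_sink _ ⟨Q, (hmem Q).2 ⟨hQ₁, hQ₂, hTQ⟩⟩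
    (by rw [hmem]; omega) hSleft hSright
  rw [hmem] at hxS
  have hxn : x + 1 < n := by omega
  exact ⟨⟨x, hx⟩, ⟨hi, hxn, by simp only; omega, by simp only; omega,
    not_lt.1 (not_exists.1 hx1 hxn), hix⟩, hxS.2.2⟩

lemma exists_addable_cornerExcess_eq (hC : IsASM C) (hm : 1 ≤ m)
    (hmax : ∀ P ≤ n, ∀ Q ≤ n, cornerExcess C v P Q ≤ m) {P Q : ℕ} (hP : P ≤ n) (hQ : Q ≤ n)
    (hPQ : cornerExcess C v P Q = m) :
    ∃ i j : Fin n, Addable v i j ∧ cornerExcess C v (i + 1) (j + 1) = m := by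
  obtain ⟨i, hi, hvQ, hQv, hiQ⟩ := exists_row_sink hC hm hQ (hmax · · Q hQ) hP hPQ
  have hbin := fun x (hx : x < n) => hC.transpose.rowsAlternate.1 ⟨x, hx⟩ (i + 1)
  have hmax' := fun x => hmax (i + 1) hi.le x
  refine ⟨i, exists_addable_of_closed v hi (fun Q => cornerExcess C v (i + 1) Q = m)
    (fun x hx hT hvx => ?_) (fun x hx hT hvx => ?_) hvQ hQv hiQ⟩
  · have hstep := cornerExcess_succ_right (C := C) (v := v) (i + 1) hx
    have := hmax' x (by omega)
    rw [if_pos (by omega)] at hstep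
    rcases hbin x hx with h | h <;> omega
  · have hstep := cornerExcess_succ_right (C := C) (v := v) (i + 1) hx
    have := hmax' (x + 1) (by omega)
    rw [if_neg (by omega)] at hstep
    rcases hbin x hx with h | h <;> omega

end Walk

section Covers

variable {v : Equiv.Perm (Fin n)}

lemma exists_addable_asmLE_bump {C : Matrix (Fin n) (Fin n) ℤ} (hC : IsASM C)
    (hlt : asmLT C (permMatrix v)) : ∃ i j, Addable v i j ∧ asmLE C (bump v i j) := by
  obtain ⟨c, hc, hmax⟩ := exists_max_image (range (n + 1) ×ˢ range (n + 1))
    (fun c => cornerExcess C v c.1 c.2) ⟨(0, 0), by simp⟩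
  simp only [mem_product, mem_range] at hc
  have hmax' : ∀ P ≤ n, ∀ Q ≤ n, cornerExcess C v P Q ≤ cornerExcess C v c.1 c.2 :=
    fun P hP Q hQ => hmax (P, Q) (by simp only [mem_product, mem_range]; omega)
  have hexc (a b : Fin n) : cornerExcess C v (a + 1) (b + 1)
      = cornerSum C a b - cornerSum (permMatrix v) a b := by
    rw [cornerExcess, cornerSum_eq_extCornerSum, cornerSum_eq_extCornerSum]
  have hpos : 1 ≤ cornerExcess C v c.1 c.2 := by
    obtain ⟨a, b, hab⟩ : ∃ a b, cornerSum (permMatrix v) a b < cornerSum C a b := by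
      simpa [asmLE] using hlt.2
    have := hmax' (a + 1) a.isLt (b + 1) b.isLt
    rw [hexc] at this
    omega
  obtain ⟨i, j, h, hij⟩ := exists_addable_cornerExcess_eq hC hpos hmax' (by omega) (by omega) rfl
  refine ⟨i, j, h, fun a b => ?_⟩
  obtain ⟨hi, hj, -⟩ := h
  rw [cornerSum_bump hi hj]
  split_ifs with hab
  · obtain ⟨rfl, rfl⟩ := hab
    rw [hexc] at hij
    omega
  · simpa using hlt.1 a b

lemma eq_bump_of_asmCovers {C : Matrix (Fin n) (Fin n) ℤ} (hC : IsASM C)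
    (hcov : asmCovers C (permMatrix v)) : ∃ i j, Addable v i j ∧ C = bump v i j := by
  obtain ⟨i, j, h, hle⟩ := exists_addable_asmLE_bump hC hcov.1
  refine ⟨i, j, h, by_contra fun hne => hcov.2 _ (isASM_bump h) ⟨hle, fun hge => ?_⟩
    (asmCovers_bump h).1⟩
  exact hne (eq_of_asmLE_of_asmLE hle hge)

lemma joinIrred_permMatrix_iff :
    JoinIrred (permMatrix v) ↔ ∃! c : Fin n × Fin n, Addable v c.1 c.2 := by
  have hcov (i j : Fin n) (h : Addable v i j) :
      IsASM (bump v i j) ∧ asmCovers (bump v i j) (permMatrix v) :=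
    ⟨isASM_bump h, asmCovers_bump h⟩
  refine ⟨fun ⟨_, C, ⟨hC, hCcov⟩, huniq⟩ => ?_, fun ⟨c, hc, huniq⟩ => ?_⟩
  · obtain ⟨i, j, h, rfl⟩ := eq_bump_of_asmCovers hC hCcov
    refine ⟨(i, j), h, fun c hc => ?_⟩
    obtain ⟨h₁, h₂⟩ := eq_of_bump_eq hc h (huniq _ (hcov _ _ hc))
    exact Prod.ext h₁ h₂
  · refine ⟨isASM_permMatrix v, bump v c.1 c.2, hcov _ _ hc, fun C ⟨hC, hCcov⟩ => ?_⟩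
    obtain ⟨i, j, h, rfl⟩ := eq_bump_of_asmCovers hC hCcov
    rw [← huniq (i, j) h]

end Covers

def HasDescentAt (w : Equiv.Perm (Fin n)) (i : Fin n) : Prop :=
  ∃ h : (i : ℕ) + 1 < n, w ⟨i + 1, h⟩ < w i

section Descents

variable {v : Equiv.Perm (Fin n)} {i j : Fin n}

lemma Addable.hasDescentAt (h : Addable v i j) : HasDescentAt v i := by
  obtain ⟨hi, -, h₁, h₂, -⟩ := h
  exact ⟨hi, by rw [Fin.lt_def]; omega⟩

lemma HasDescentAt.exists_addable (h : HasDescentAt v i) : ∃ j, Addable v i j := by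
  obtain ⟨hi, hlt⟩ := h
  obtain ⟨j, hj, -⟩ := exists_addable_of_closed v hi (fun _ => True) (fun _ _ _ _ => trivial)
    (fun _ _ _ _ => trivial) hlt le_rfl trivial
  exact ⟨j, hj⟩

lemma existsUnique_addable_iff :
    (∃! c : Fin n × Fin n, Addable v c.1 c.2)
      ↔ ∃! p : Fin n × Fin n, HasDescentAt v.symm p.1 ∧ HasDescentAt v p.2 := by
  refine ⟨fun ⟨c, hc, huniq⟩ => ⟨(c.2, c.1), ⟨hc.symm.hasDescentAt, hc.hasDescentAt⟩, ?_⟩,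
    fun ⟨p, ⟨hp₁, hp₂⟩, huniq⟩ => ?_⟩
  · rintro ⟨a, b⟩ ⟨ha, hb⟩
    obtain ⟨j, hj⟩ := hb.exists_addable
    obtain ⟨i, hi⟩ := ha.exists_addable
    have hi' : Addable v i a := by simpa using hi.symm
    have hbi := (huniq (b, j) hj).trans (huniq (i, a) hi').symm
    rw [← huniq (i, a) hi']
    exact Prod.ext rfl (Prod.ext_iff.1 hbi).1
  · have hdesc (c : Fin n × Fin n) (hc : Addable v c.1 c.2) : c = (p.2, p.1) := by
      have := huniq (c.2, c.1) ⟨hc.symm.hasDescentAt, hc.hasDescentAt⟩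
      rw [← this]
    obtain ⟨j, hj⟩ := hp₂.exists_addable
    exact ⟨(p.2, j), hj, fun c hc => (hdesc c hc).trans (hdesc (p.2, j) hj).symm⟩

end Descents

theorem joinIrred_iff_bigrassmannian {n : ℕ} (v : Equiv.Perm (Fin n)) :
    JoinIrred (permMatrix v) ↔
      ∃! p : Fin n × Fin n, ∃ (hi : (p.1 : ℕ) + 1 < n) (hj : (p.2 : ℕ) + 1 < n),
        v.symm ⟨p.1 + 1, hi⟩ < v.symm p.1 ∧ v ⟨p.2 + 1, hj⟩ < v p.2 := by
  rw [joinIrred_permMatrix_iff, existsUnique_addable_iff]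
  refine existsUnique_congr fun p => ?_
  exact ⟨fun ⟨⟨hi, h₁⟩, ⟨hj, h₂⟩⟩ => ⟨hi, hj, h₁, h₂⟩, fun ⟨hi, hj, h₁, h₂⟩ => ⟨⟨hi, h₁⟩, ⟨hj, h₂⟩⟩⟩
end
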